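/- arXiv:1802.00703 — 11 statements merged into one kernel-verified Lean document; each statement's English description precedes it below -/
import Mathlib

section
/- For a fixed binary string x of length m and any n ≥ m, the number of binary strings y of length n that contain x as a subsequence equals the sum over r from m to n of binomial(n, r); in particular this count is independent of the form of x. -/
private def FB : ℕ → Finset (List Bool)
  | 0 => {[]}
  | n + 1 => (FB n).image (true :: ·) ∪ (FB n).image (false :: ·)

private lemma mem_FB : ∀ n y, y ∈ FB n ↔ y.length = n := by
  intro n
  induction n with
  | zero => intro y; simp [FB, List.length_eq_zero_iff]
  | succ n ih =>
    intro y
    cases y with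
    | nil => simp [FB]
    | cons b t =>
      cases b <;> simp [FB, ih t]

private def cnt (n : ℕ) (x : List Bool) : ℕ :=
  ((FB n).filter (fun y => x.Sublist y)).card

private lemma card_FB : ∀ n, (FB n).card = 2 ^ n := by
  intro n
  induction n with
  | zero => simp [FB]
  | succ n ih =>
    have hdisj : Disjoint ((FB n).image (true :: ·)) ((FB n).image (false :: ·)) := by
      simp only [Finset.disjoint_left, Finset.mem_image]
      rintro a ⟨z, _, rfl⟩ ⟨w, _, h⟩
      simp at h
    have h1 : ((FB n).image (true :: ·)).card = (FB n).card :=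
      Finset.card_image_of_injective _ (fun a b h => by simpa using h)
    have h2 : ((FB n).image (false :: ·)).card = (FB n).card :=
      Finset.card_image_of_injective _ (fun a b h => by simpa using h)
    rw [FB, Finset.card_union_of_disjoint hdisj, h1, h2, ih]
    ring

private lemma sublist_cons_ne {c b : Bool} {xs y : List Bool} (h : c ≠ b) :
    (c :: xs).Sublist (b :: y) ↔ (c :: xs).Sublist y := by
  constructor
  · intro hs
    rcases List.sublist_cons_iff.mp hs with h' | ⟨r, hr, _⟩
    · exact h'
    · exact absurd (by injection hr) h
  · exact fun hs => hs.trans (List.sublist_cons_self _ _)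

private lemma cnt_rec (n : ℕ) (c : Bool) (xs : List Bool) :
    cnt (n + 1) (c :: xs) = cnt n xs + cnt n (c :: xs) := by
  have hdisj : Disjoint (((FB n).image (true :: ·)).filter (fun y => (c :: xs).Sublist y))
      (((FB n).image (false :: ·)).filter (fun y => (c :: xs).Sublist y)) := by
    apply Finset.disjoint_filter_filter
    simp only [Finset.disjoint_left, Finset.mem_image]
    rintro a ⟨z, _, rfl⟩ ⟨w, _, h⟩
    simp at h
  have key : ∀ b : Bool,
      (((FB n).image (b :: ·)).filter (fun y => (c :: xs).Sublist y)).card =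
      ((FB n).filter (fun y => (c :: xs).Sublist (b :: y))).card := by
    intro b
    rw [Finset.filter_image, Finset.card_image_of_injective _
      (fun a b h => by simpa using h)]
  have hsplit : cnt (n + 1) (c :: xs) =
      ((FB n).filter (fun y => (c :: xs).Sublist (true :: y))).card +
      ((FB n).filter (fun y => (c :: xs).Sublist (false :: y))).card := by
    rw [cnt, FB, Finset.filter_union, Finset.card_union_of_disjoint hdisj, key, key]
  rw [hsplit]
  cases c
  · have h1 : (FB n).filter (fun y => (false :: xs).Sublist (true :: y)) =
        (FB n).filter (fun y => (false :: xs).Sublist y) :=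
      Finset.filter_congr (fun y _ => by simp [sublist_cons_ne (by simp : false ≠ true)])
    have h2 : (FB n).filter (fun y => (false :: xs).Sublist (false :: y)) =
        (FB n).filter (fun y => xs.Sublist y) :=
      Finset.filter_congr (fun y _ => by simp [List.cons_sublist_cons])
    rw [h1, h2]
    unfold cnt
    omega
  · have h1 : (FB n).filter (fun y => (true :: xs).Sublist (true :: y)) =
        (FB n).filter (fun y => xs.Sublist y) :=
      Finset.filter_congr (fun y _ => by simp [List.cons_sublist_cons])
    have h2 : (FB n).filter (fun y => (true :: xs).Sublist (false :: y)) =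
        (FB n).filter (fun y => (true :: xs).Sublist y) :=
      Finset.filter_congr (fun y _ => by simp [sublist_cons_ne (by simp : true ≠ false)])
    rw [h1, h2]
    unfold cnt
    omega

private lemma sum_rec (n m : ℕ) :
    ∑ r ∈ Finset.Icc (m + 1) (n + 1), (n + 1).choose r =
      (∑ r ∈ Finset.Icc m n, n.choose r) + ∑ r ∈ Finset.Icc (m + 1) n, n.choose r := by
  have hmap : Finset.Icc (m + 1) (n + 1) =
      Finset.map (addRightEmbedding 1) (Finset.Icc m n) := by
    rw [Finset.map_add_right_Icc]
  rw [hmap, Finset.sum_map]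
  simp only [addRightEmbedding_apply]
  have : ∀ r ∈ Finset.Icc m n, (n + 1).choose (r + 1) = n.choose r + n.choose (r + 1) :=
    fun r _ => Nat.choose_succ_succ n r
  rw [Finset.sum_congr rfl this, Finset.sum_add_distrib]
  congr 1
  -- ∑ r ∈ Icc m n, n.choose (r+1) = ∑ r ∈ Icc (m+1) n, n.choose r
  have hmap2 : Finset.Icc (m + 1) (n + 1) =
      Finset.map (addRightEmbedding 1) (Finset.Icc m n) := hmap
  have := (Finset.sum_map (Finset.Icc m n) (addRightEmbedding 1) (fun r => n.choose r)).symm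
  simp only [addRightEmbedding_apply] at this
  rw [this, ← hmap2]
  rcases le_or_gt (m + 1) (n + 1) with h | h
  · rw [Finset.sum_Icc_succ_top h, Nat.choose_succ_self, add_zero]
  · rw [Finset.Icc_eq_empty (by omega), Finset.Icc_eq_empty (by omega)]

private lemma cnt_eq : ∀ n (x : List Bool),
    cnt n x = ∑ r ∈ Finset.Icc x.length n, n.choose r := by
  intro n
  induction n with
  | zero =>
    intro x
    cases x with
    | nil => simp [cnt, FB]
    | cons c xs =>
      rw [Finset.Icc_eq_empty (by simp), Finset.sum_empty]
      simp [cnt, FB, Finset.filter_singleton]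
  | succ n ih =>
    intro x
    cases x with
    | nil =>
      have : cnt (n + 1) [] = (FB (n + 1)).card := by
        rw [cnt]; congr 1; exact Finset.filter_true_of_mem (fun y _ => List.nil_sublist y)
      rw [this, card_FB]
      have : Finset.Icc 0 (n + 1) = Finset.range (n + 2) := by
        ext r; simp [Nat.lt_succ_iff]
      simp only [List.length_nil, this]
      rw [Nat.sum_range_choose]
    | cons c xs =>
      rw [cnt_rec, ih xs, ih (c :: xs)]
      simp only [List.length_cons]
      rw [sum_rec]

/-- The number of binary strings `y` of length `n` containing a fixed string `x`
of length `m` as a subsequence equals `∑_{r=m}^{n} C(n, r)`; in particular it is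
independent of the form of `x`. -/
theorem upsilon_card (m n : ℕ) (hmn : m ≤ n) (x : List Bool) (hx : x.length = m) :
    Nat.card {y : List Bool // y.length = n ∧ x.Sublist y} =
      ∑ r ∈ Finset.Icc m n, n.choose r := by
  subst hx
  have h := cnt_eq n x
  rw [← h, cnt, ← Nat.card_eq_finsetCard]
  exact Nat.card_congr (Equiv.subtypeEquivRight (fun y => by
    simp [mem_FB, and_comm]))
end

section
/- For a fixed binary string x of length m and n ≥ m, the number of strings y ∈ {0,1}^n whose canonical (lexicographically first) embedding of x ends at position n equals binomial(n−1, m−1); in particular it is independent of the form of x. -/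
/-- `f` is an embedding of `x` into `y` as a subsequence: a strictly monotone
choice of indices along which `y` restricts to `x`. -/
def IsEmbedding {m n : ℕ} (x : Fin m → Bool) (y : Fin n → Bool) (f : Fin m → Fin n) : Prop :=
  StrictMono f ∧ ∀ i, y (f i) = x i

/-- `f` is the canonical (lexicographically first) embedding of `x` into `y`:
for any other embedding `g`, `f` is lexicographically strictly earlier. -/
def IsInitialEmbedding {m n : ℕ} (x : Fin m → Bool) (y : Fin n → Bool)
    (f : Fin m → Fin n) : Prop :=
  IsEmbedding x y f ∧
    ∀ g : Fin m → Fin n, IsEmbedding x y g → g ≠ f →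
      ∃ r : Fin m, (∀ j : Fin m, j < r → f j = g j) ∧ f r < g r

/-!
The canonical embedding is the greedy one: `f` is initial iff no position strictly between
`f (i - 1)` and `f i` carries the letter `x i`. When `f` is strictly monotone and ends at the
last position, this condition pins down every letter of `y` (a position before `f i` but after
`f (i - 1)` must carry `!x i`), and such a `y` always exists. So `y ↦ f` is a bijection onto the
strictly monotone `f` with `f (m - 1) = n - 1`, i.e. onto the `(m - 1)`-subsets of the first
`n - 1` positions.
-/

section Greedy

variable {m n : ℕ} {x : Fin m → Bool} {y : Fin n → Bool} {f g : Fin m → Fin n}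

def IsGreedy (x : Fin m → Bool) (y : Fin n → Bool) (f : Fin m → Fin n) : Prop :=
  ∀ i j, (∀ k < i, f k < j) → j < f i → y j ≠ x i

theorem IsInitialEmbedding.eq (hf : IsInitialEmbedding x y f) (hg : IsInitialEmbedding x y g) :
    f = g := by
  by_contra hne
  obtain ⟨r, hfg, hr⟩ := hf.2 g hg.1 (Ne.symm hne)
  obtain ⟨s, hgf, hs⟩ := hg.2 f hf.1 hne
  rcases lt_trichotomy r s with hrs | rfl | hsr
  · exact hr.ne (hgf r hrs).symm
  · exact lt_asymm hr hs
  · exact hs.ne (hfg s hsr).symm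

theorem IsInitialEmbedding.isGreedy (hf : IsInitialEmbedding x y f) : IsGreedy x y f := by
  intro i j hbefore hj hyj
  -- moving the `i`-th position of `f` back to `j` gives a lexicographically earlier embedding
  have hg : IsEmbedding x y (Function.update f i j) := by
    refine ⟨fun a b hab => ?_, fun k => ?_⟩
    · rcases eq_or_ne a i with rfl | ha
      · simpa [hab.ne'] using hj.trans (hf.1.1 hab)
      rcases eq_or_ne b i with rfl | hb
      · simpa [ha] using hbefore a hab
      · simpa [ha, hb] using hf.1.1 hab
    · rcases eq_or_ne k i with rfl | hk
      · simpa using hyj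
      · simpa [hk] using hf.1.2 k
  have hne : Function.update f i j ≠ f := fun h => hj.ne (by simpa using congrFun h i)
  obtain ⟨r, hagree, hr⟩ := hf.2 _ hg hne
  rcases lt_trichotomy r i with hri | rfl | hir
  · simp [hri.ne] at hr
  · simp only [Function.update_self] at hr
    exact lt_asymm hr hj
  · exact hj.ne' (by simpa using hagree i hir)

theorem IsEmbedding.isInitialEmbedding (hf : IsEmbedding x y f) (hgreedy : IsGreedy x y f) :
    IsInitialEmbedding x y f := by
  refine ⟨hf, fun g hg hne => ?_⟩
  have hdiff : ∃ r, f r ≠ g r := Function.ne_iff.1 (Ne.symm hne)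
  have hagree : ∀ k < Fin.find _ hdiff, f k = g k := fun k hk => not_not.1 (Fin.find_min hdiff hk)
  refine ⟨Fin.find _ hdiff, hagree, (Fin.find_spec hdiff).lt_or_gt.resolve_right fun hgf => ?_⟩
  exact hgreedy _ _ (fun k hk => hagree k hk ▸ hg.1 hk) hgf (hg.2 _)

theorem isInitialEmbedding_iff : IsInitialEmbedding x y f ↔ IsEmbedding x y f ∧ IsGreedy x y f :=
  ⟨fun hf => ⟨hf.1, hf.isGreedy⟩, fun hf => hf.1.isInitialEmbedding hf.2⟩

end Greedy

section Reconstruction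

variable {m n : ℕ} {x : Fin m → Bool} {y y' : Fin n → Bool} {f : Fin m → Fin n}

theorem exists_first_le_of_exists {j : Fin n} (h : ∃ i, j ≤ f i) :
    ∃ i, j ≤ f i ∧ ∀ k < i, f k < j :=
  ⟨Fin.find _ h, Fin.find_spec h, fun _ hk => not_le.1 (Fin.find_min h hk)⟩

theorem IsInitialEmbedding.eq_left (hcov : ∀ j, ∃ i, j ≤ f i) (hy : IsInitialEmbedding x y f)
    (hy' : IsInitialEmbedding x y' f) : y = y' := by
  funext j
  obtain ⟨i, hji, hbefore⟩ := exists_first_le_of_exists (hcov j)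
  rcases hji.eq_or_lt with rfl | hlt
  · rw [hy.1.2, hy'.1.2]
  · rw [Bool.eq_not.2 (hy.isGreedy i j hbefore hlt), Bool.eq_not.2 (hy'.isGreedy i j hbefore hlt)]

theorem exists_isInitialEmbedding (hf : StrictMono f) (hcov : ∀ j, ∃ i, j ≤ f i) :
    ∃ y, IsInitialEmbedding x y f := by
  have hfind : ∀ i j, (∀ k < i, f k < j) → j ≤ f i → Fin.find _ (hcov j) = i :=
    fun i j hbefore hj => (Fin.find_eq_iff _).2 ⟨hj, fun k hk => not_le.2 (hbefore k hk)⟩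
  -- position `j` carries the first letter whose position is `≥ j` if it is that position,
  -- and the complement of that letter otherwise
  let y j :=
    if f (Fin.find _ (hcov j)) = j then x (Fin.find _ (hcov j)) else !x (Fin.find _ (hcov j))
  refine ⟨y, isInitialEmbedding_iff.2 ⟨⟨hf, fun i => ?_⟩, fun i j hbefore hj => ?_⟩⟩
  · simp [y, hfind i (f i) (fun k hk => hf hk) le_rfl]
  · simp [y, hfind i j hbefore hj.le, hj.ne']

theorem exists_isInitialEmbedding_iff (hcov : ∀ j, ∃ i, j ≤ f i) :
    (∃ y, IsInitialEmbedding x y f) ↔ StrictMono f :=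
  ⟨fun ⟨_, hy⟩ => hy.1.1, fun hf => exists_isInitialEmbedding hf hcov⟩

end Reconstruction

theorem Nat.card_exists_rel_eq {α β : Type*} {R : α → β → Prop} {p : β → Prop}
    (hfun : ∀ a b b', R a b → R a b' → b = b') (hinj : ∀ a a' b, p b → R a b → R a' b → a = a') :
    Nat.card {a // ∃ b, R a b ∧ p b} = Nat.card {b // (∃ a, R a b) ∧ p b} := by
  refine Nat.card_congr (Equiv.ofBijective
    (fun a => ⟨a.2.choose, ⟨a.1, a.2.choose_spec.1⟩, a.2.choose_spec.2⟩) ⟨?_, ?_⟩)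
  · rintro ⟨a, ha⟩ ⟨a', ha'⟩ h
    have hb : ha.choose = ha'.choose := congrArg Subtype.val h
    exact Subtype.ext (hinj a a' _ ha.choose_spec.2 ha.choose_spec.1 (hb ▸ ha'.choose_spec.1))
  · rintro ⟨b, ⟨a, hab⟩, hb⟩
    have ha : ∃ b, R a b ∧ p b := ⟨b, hab, hb⟩
    exact ⟨⟨a, ha⟩, Subtype.ext (hfun a _ _ ha.choose_spec.1 hab)⟩

theorem Fin.card_orderEmbedding (k N : ℕ) : Nat.card (Fin k ↪o Fin N) = N.choose k := by
  rw [Nat.card_congr Set.powersetCard.ofFinEmbEquiv, Set.powersetCard.card,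
    Nat.card_eq_fintype_card, Fintype.card_fin]

def Fin.strictMonoLastEquiv (k N : ℕ) :
    {f : Fin (k + 1) → Fin (N + 1) // StrictMono f ∧ f (Fin.last k) = Fin.last N} ≃
      (Fin k ↪o Fin N) where
  toFun f := OrderEmbedding.ofStrictMono
    (fun i => (f.1 i.castSucc).castPred ((f.2.1 (Fin.castSucc_lt_last i)).trans_eq f.2.2).ne)
    fun a b hab => by simpa using f.2.1 (Fin.castSucc_lt_castSucc_iff.2 hab)
  invFun e := ⟨Fin.lastCases (Fin.last N) fun i => (e i).castSucc, fun a b hab => by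
      induction b using Fin.lastCases with
      | last =>
        induction a using Fin.lastCases with
        | last => exact absurd hab (lt_irrefl _)
        | cast a => simp
      | cast b =>
        induction a using Fin.lastCases with
        | last => exact absurd hab (not_lt.2 (Fin.le_last _))
        | cast a => simpa using hab, by simp⟩
  left_inv f := by
    ext i
    induction i using Fin.lastCases with
    | last => simp [f.2.2]
    | cast i => simp [OrderEmbedding.ofStrictMono]
  right_inv e := by ext; simp

theorem Fin.card_strictMono_last (k N : ℕ) :
    Nat.card {f : Fin (k + 1) → Fin (N + 1) // StrictMono f ∧ f (Fin.last k) = Fin.last N} =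
      N.choose k := by
  rw [Nat.card_congr (Fin.strictMonoLastEquiv k N), Fin.card_orderEmbedding]

/-- The number of `y ∈ {0,1}^n` whose canonical embedding of `x` ends at the last
position of `y` is `C(n-1, m-1)`, independently of the form of `x`. -/
theorem maximal_initials_card (m n : ℕ) (hm : 1 ≤ m) (hmn : m ≤ n) (x : Fin m → Bool) :
    Nat.card {y : Fin n → Bool // ∃ f : Fin m → Fin n,
        IsInitialEmbedding x y f ∧ (f ⟨m - 1, by omega⟩ : ℕ) = n - 1} =
      (n - 1).choose (m - 1) := by
  obtain ⟨k, rfl⟩ : ∃ k, m = k + 1 := ⟨m - 1, by omega⟩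
  obtain ⟨N, rfl⟩ : ∃ N, n = N + 1 := ⟨n - 1, by omega⟩
  have hcov (f : Fin (k + 1) → Fin (N + 1)) (hf : f (Fin.last k) = Fin.last N) (j : Fin (N + 1)) :
      ∃ i, j ≤ f i :=
    ⟨Fin.last k, hf ▸ Fin.le_last j⟩
  calc _ = Nat.card {y // ∃ f, IsInitialEmbedding x y f ∧ f (Fin.last k) = Fin.last N} := by
        simp only [Fin.ext_iff, Fin.val_last, Nat.add_sub_cancel]; rfl
    _ = Nat.card {f // (∃ y, IsInitialEmbedding x y f) ∧ f (Fin.last k) = Fin.last N} :=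
        Nat.card_exists_rel_eq (fun _ _ _ hf hf' => hf.eq hf')
          (fun _ _ f hf hy hy' => hy.eq_left (hcov f hf) hy')
    _ = Nat.card {f // StrictMono f ∧ f (Fin.last k) = Fin.last N} := by
        simp only [fun f => and_congr_left fun hf =>
          exists_isInitialEmbedding_iff (x := x) (hcov f hf)]
    _ = N.choose k := Fin.card_strictMono_last k N
    _ = _ := by simp
end

section
/- For a fixed binary string x of length m with Hamming weight h, n ≥ m, and 0 ≤ c ≤ n−m, the number of strings y ∈ {0,1}^n that contain x as a subsequence, have Hamming weight h + c, and whose canonical embedding of x ends at position n, equals binomial((n−m−c) + h − 1, n−m−c) · binomial(c + (m−h) − 1, c). In particular this count depends only on n, m, c and h, not on the exact form of x. -/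
/-- Hamming weight of a binary string. -/
def hw {k : ℕ} (s : Fin k → Bool) : ℕ := (Finset.univ.filter fun i => s i = true).card

open Finset

namespace MIC


/-- cumulative position of the `k`-th embedded letter, given gap sequence `a` -/
def pos (a : ℕ → ℕ) (k : ℕ) : ℕ := k + ∑ j ∈ Finset.range (k + 1), a j

lemma pos_zero (a : ℕ → ℕ) : pos a 0 = a 0 := by simp [pos]

lemma pos_succ (a : ℕ → ℕ) (k : ℕ) : pos a (k + 1) = pos a k + a (k + 1) + 1 := by
  simp [pos, Finset.sum_range_succ]; ring

lemma pos_strictMono (a : ℕ → ℕ) : StrictMono (pos a) :=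
  strictMono_nat_of_lt_succ fun k => by rw [pos_succ]; omega

lemma self_le_pos (a : ℕ → ℕ) (p : ℕ) : p ≤ pos a p := Nat.le_add_right _ _

lemma apply_le_pos (a : ℕ → ℕ) (k : ℕ) : a k ≤ pos a k := by
  have : a k ≤ ∑ j ∈ Finset.range (k + 1), a j :=
    Finset.single_le_sum (f := a) (fun _ _ => Nat.zero_le _) (by simp)
  simp only [pos]; omega

/-- index of the block containing position `p` -/
def idx (a : ℕ → ℕ) (p : ℕ) : ℕ := Nat.find (⟨p, self_le_pos a p⟩ : ∃ k, p ≤ pos a k)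

lemma le_pos_idx (a : ℕ → ℕ) (p : ℕ) : p ≤ pos a (idx a p) :=
  Nat.find_spec (⟨p, self_le_pos a p⟩ : ∃ k, p ≤ pos a k)

lemma pos_lt_of_lt_idx (a : ℕ → ℕ) (p : ℕ) {j : ℕ} (h : j < idx a p) : pos a j < p := by
  have := Nat.find_min (⟨p, self_le_pos a p⟩ : ∃ k, p ≤ pos a k) h
  omega

lemma idx_le {a : ℕ → ℕ} {p k : ℕ} (h : p ≤ pos a k) : idx a p ≤ k := Nat.find_min' _ h

lemma idx_eq_of {a : ℕ → ℕ} {p k : ℕ} (h1 : p ≤ pos a k) (h2 : ∀ j < k, pos a j < p) :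
    idx a p = k := by
  refine le_antisymm (idx_le h1) ?_
  by_contra h
  push_neg at h
  have := h2 _ h
  have := le_pos_idx a p
  omega

lemma idx_pos_self (a : ℕ → ℕ) (k : ℕ) : idx a (pos a k) = k :=
  le_antisymm (idx_le le_rfl) ((pos_strictMono a).le_iff_le.mp (le_pos_idx a _))

/-- the encoded string -/
def enc (x : ℕ → Bool) (a : ℕ → ℕ) (p : ℕ) : Bool :=
  if pos a (idx a p) = p then x (idx a p) else !x (idx a p)

lemma enc_pos_self (x : ℕ → Bool) (a : ℕ → ℕ) (k : ℕ) : enc x a (pos a k) = x k := by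
  simp [enc, idx_pos_self]

lemma idx_eq_iff {a : ℕ → ℕ} {p k : ℕ} :
    idx a p = k ↔ pos a k - a k ≤ p ∧ p ≤ pos a k := by
  constructor
  · rintro rfl
    refine ⟨?_, le_pos_idx a p⟩
    rcases Nat.eq_zero_or_pos (idx a p) with h | h
    · simp [h, pos_zero]
    · have h1 : pos a (idx a p - 1) < p := pos_lt_of_lt_idx a p (by omega)
      have h2 : pos a (idx a p - 1 + 1) = pos a (idx a p - 1) + a (idx a p - 1 + 1) + 1 :=
        pos_succ a _
      have h3 : idx a p - 1 + 1 = idx a p := by omega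
      rw [h3] at h2
      omega
  · rintro ⟨h1, h2⟩
    refine idx_eq_of h2 fun j hj => ?_
    have hmono : pos a j ≤ pos a (k - 1) := (pos_strictMono a).monotone (by omega)
    rcases Nat.eq_zero_or_pos k with rfl | hk
    · omega
    · have h3 : pos a (k - 1 + 1) = pos a (k - 1) + a (k - 1 + 1) + 1 := pos_succ a _
      have h4 : k - 1 + 1 = k := by omega
      rw [h4] at h3
      omega

lemma filter_fin_card (n : ℕ) (P : ℕ → Prop) [DecidablePred P] :
    ((Finset.univ : Finset (Fin n)).filter fun p : Fin n => P ↑p).card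
      = ((Finset.range n).filter P).card := by
  rw [← Finset.card_image_of_injective _ Fin.val_injective]
  congr 1
  ext q
  simp only [Finset.mem_image, Finset.mem_filter, Finset.mem_univ, true_and, Finset.mem_range]
  constructor
  · rintro ⟨p, hp, rfl⟩; exact ⟨p.isLt, hp⟩
  · rintro ⟨hq, hPq⟩; exact ⟨⟨q, hq⟩, hPq, rfl⟩

variable {m n : ℕ}

lemma enc_card (x : ℕ → Bool) (a : ℕ → ℕ) (hm : 1 ≤ m)
    (hpos : pos a (m - 1) = n - 1) (hn : 1 ≤ n) :
    ((Finset.univ : Finset (Fin n)).filter fun p : Fin n => enc x a ↑p = true).card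
      = ∑ k ∈ Finset.range m, (if x k then 1 else a k) := by
  have hposlt : ∀ k < m, pos a k < n := fun k hk => by
    have := (pos_strictMono a).monotone (show k ≤ m - 1 by omega); omega
  have hidxlt : ∀ p : Fin n, idx a ↑p < m := fun p => by
    have h1 : (p : ℕ) ≤ pos a (m - 1) := by have := p.isLt; omega
    have := idx_le h1; omega
  rw [Finset.card_eq_sum_card_fiberwise (f := fun p : Fin n => idx a ↑p)
      (t := Finset.range m) (fun p _ => Finset.mem_range.2 (hidxlt p))]
  refine Finset.sum_congr rfl fun k hk => ?_
  rw [Finset.mem_range] at hk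
  have hconv : (((Finset.univ : Finset (Fin n)).filter fun p : Fin n => enc x a ↑p = true).filter
        fun p : Fin n => idx a ↑p = k).card
      = ((Finset.range n).filter fun p => enc x a p = true ∧ idx a p = k).card := by
    rw [Finset.filter_filter]
    exact filter_fin_card n (fun p => enc x a p = true ∧ idx a p = k)
  rw [hconv]
  by_cases hx : x k
  · rw [if_pos hx]
    have hset : ((Finset.range n).filter fun p => enc x a p = true ∧ idx a p = k)
        = {pos a k} := by
      ext p
      simp only [Finset.mem_filter, Finset.mem_range, Finset.mem_singleton]
      constructor
      · rintro ⟨hpn, henc, hidx⟩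
        by_contra hne
        have h2 : pos a (idx a p) ≠ p := by rw [hidx]; omega
        rw [enc, if_neg h2, hidx, hx] at henc
        simp at henc
      · rintro rfl
        exact ⟨hposlt k hk, by rw [enc_pos_self, hx], idx_pos_self a k⟩
    rw [hset, Finset.card_singleton]
  · rw [if_neg hx]
    have hxk : x k = false := by simpa using hx
    have hset : ((Finset.range n).filter fun p => enc x a p = true ∧ idx a p = k)
        = Finset.Ico (pos a k - a k) (pos a k) := by
      ext p
      simp only [Finset.mem_filter, Finset.mem_range, Finset.mem_Ico]
      constructor
      · rintro ⟨hpn, henc, hidx⟩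
        have hb := idx_eq_iff.1 hidx
        refine ⟨hb.1, ?_⟩
        rcases lt_or_eq_of_le hb.2 with h | h
        · exact h
        · rw [h, enc_pos_self, hxk] at henc
          exact absurd henc (by simp)
      · rintro ⟨hlo, hlt⟩
        have hidx : idx a p = k := idx_eq_iff.2 ⟨hlo, le_of_lt hlt⟩
        refine ⟨by have := hposlt k hk; omega, ?_, hidx⟩
        rw [enc, hidx, if_neg (by omega), hxk]
        rfl
    rw [hset, Nat.card_Ico]
    have := apply_le_pos a k
    omega

def xe (x : Fin m → Bool) : ℕ → Bool := fun k => if h : k < m then x ⟨k, h⟩ else false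

def aext (a : Fin m → ℕ) : ℕ → ℕ := fun k => if h : k < m then a ⟨k, h⟩ else 0

lemma xe_eq (x : Fin m → Bool) {k : ℕ} (hk : k < m) : xe x k = x ⟨k, hk⟩ := dif_pos hk

lemma aext_eq (a : Fin m → ℕ) {k : ℕ} (hk : k < m) : aext a k = a ⟨k, hk⟩ := dif_pos hk

section Greedy

variable {x : Fin m → Bool} {a : ℕ → ℕ}

lemma pos_lt (hm : 1 ≤ m) (hpos : pos a (m - 1) = n - 1) (hn : 1 ≤ n)
    {k : ℕ} (hk : k < m) : pos a k < n := by
  have := (pos_strictMono a).monotone (show k ≤ m - 1 by omega)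
  omega

lemma greedy (g : Fin m → Fin n)
    (hg : IsEmbedding x (fun p : Fin n => enc (xe x) a ↑p) g) :
    ∀ k (hk : k < m), pos a k ≤ ↑(g ⟨k, hk⟩) := by
  intro k
  induction k with
  | zero =>
    intro hk
    by_contra h
    push_neg at h
    have hidx : idx a ↑(g ⟨0, hk⟩) = 0 := idx_eq_of (le_of_lt h) (by omega)
    have henc : enc (xe x) a ↑(g ⟨0, hk⟩) = x ⟨0, hk⟩ := hg.2 ⟨0, hk⟩
    rw [enc, hidx, if_neg (by omega), xe_eq x hk] at henc
    simp at henc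
  | succ k ih =>
    intro hk
    by_contra h
    push_neg at h
    have hk' : k < m := by omega
    have h1 : pos a k ≤ ↑(g ⟨k, hk'⟩) := ih hk'
    have h2 : (g ⟨k, hk'⟩ : ℕ) < ↑(g ⟨k + 1, hk⟩) := hg.1 (Fin.mk_lt_mk.2 (by omega))
    have hidx : idx a ↑(g ⟨k + 1, hk⟩) = k + 1 := by
      refine idx_eq_of (le_of_lt h) fun j hj => ?_
      have : pos a j ≤ pos a k := (pos_strictMono a).monotone (by omega)
      omega
    have henc : enc (xe x) a ↑(g ⟨k + 1, hk⟩) = x ⟨k + 1, hk⟩ := hg.2 ⟨k + 1, hk⟩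
    rw [enc, hidx, if_neg (by omega), xe_eq x hk] at henc
    simp at henc

lemma enc_isInitial (hm : 1 ≤ m) (hpos : pos a (m - 1) = n - 1) (hn : 1 ≤ n) :
    IsInitialEmbedding x (fun p : Fin n => enc (xe x) a ↑p)
      (fun i : Fin m => ⟨pos a ↑i, pos_lt hm hpos hn i.isLt⟩) := by
  constructor
  · constructor
    · intro i j hij
      exact Fin.mk_lt_mk.2 (pos_strictMono a hij)
    · intro i
      show enc (xe x) a (pos a ↑i) = x i
      rw [enc_pos_self, xe_eq x i.isLt]
  · intro g hg hne
    have hne' : ∃ i, g i ≠ (fun i : Fin m => (⟨pos a ↑i, pos_lt hm hpos hn i.isLt⟩ : Fin n)) i :=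
      Function.ne_iff.1 hne
    classical
    set S := Finset.univ.filter
      (fun i : Fin m => g i ≠ (⟨pos a ↑i, pos_lt hm hpos hn i.isLt⟩ : Fin n)) with hS
    have hSne : S.Nonempty := by
      obtain ⟨i, hi⟩ := hne'
      exact ⟨i, by simp [hS, hi]⟩
    set r := S.min' hSne with hr
    refine ⟨r, fun j hj => ?_, ?_⟩
    · by_contra hj'
      have : j ∈ S := by simp [hS]; exact fun h => hj' h.symm
      have := Finset.min'_le S j this
      omega
    · have hrS : r ∈ S := Finset.min'_mem S hSne
      have hrne : g r ≠ (⟨pos a ↑r, pos_lt hm hpos hn r.isLt⟩ : Fin n) := by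
        simp [hS] at hrS; exact hrS
      have hle : pos a ↑r ≤ ↑(g r) := by
        have := greedy g hg ↑r r.isLt
        simpa using this
      refine Fin.mk_lt_mk.2 ?_ |>.trans_le le_rfl
      rcases lt_or_eq_of_le hle with h | h
      · exact h
      · exact absurd (Fin.ext h.symm) hrne

end Greedy

lemma initial_unique {x : Fin m → Bool} {y : Fin n → Bool} {f g : Fin m → Fin n}
    (hf : IsInitialEmbedding x y f) (hg : IsInitialEmbedding x y g) : f = g := by
  by_contra hne
  obtain ⟨r1, h1, h1'⟩ := hf.2 g hg.1 (fun h => hne h.symm)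
  obtain ⟨r2, h2, h2'⟩ := hg.2 f hf.1 hne
  rcases lt_trichotomy r1 r2 with h | h | h
  · have h3 := h2 r1 h
    rw [← h3] at h1'
    exact absurd h1' (lt_irrefl _)
  · subst h
    exact absurd (h1'.trans h2') (lt_irrefl _)
  · have h3 := h1 r2 h
    rw [← h3] at h2'
    exact absurd h2' (lt_irrefl _)

lemma initial_gap {x : Fin m → Bool} {y : Fin n → Bool} {f : Fin m → Fin n}
    (hf : IsInitialEmbedding x y f) (k : ℕ) (hk : k < m) (p : Fin n)
    (hp2 : ↑p < (f ⟨k, hk⟩ : ℕ)) (hp1 : ∀ j (hj : j < k), (f ⟨j, by omega⟩ : ℕ) < ↑p) :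
    y p ≠ x ⟨k, hk⟩ := by
  intro hyp
  classical
  set g : Fin m → Fin n := fun j => if j = ⟨k, hk⟩ then p else f j with hgdef
  have hgmono : StrictMono g := by
    intro i j hij
    simp only [hgdef]
    by_cases hi : i = (⟨k, hk⟩ : Fin m) <;> by_cases hj : j = (⟨k, hk⟩ : Fin m)
    · subst hi; subst hj; exact absurd hij (lt_irrefl _)
    · subst hi
      rw [if_pos rfl, if_neg hj]
      have : f (⟨k, hk⟩ : Fin m) < f j := hf.1.1 hij
      exact lt_trans (Fin.lt_def.2 hp2) this
    · subst hj
      rw [if_neg hi, if_pos rfl]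
      have hik : (i : ℕ) < k := hij
      have := hp1 ↑i hik
      have hi' : (⟨(i : ℕ), by omega⟩ : Fin m) = i := Fin.eta i i.isLt
      rw [hi'] at this
      exact Fin.lt_def.2 this
    · rw [if_neg hi, if_neg hj]
      exact hf.1.1 hij
  have hgemb : IsEmbedding x y g := by
    refine ⟨hgmono, fun j => ?_⟩
    simp only [hgdef]
    by_cases hj : j = (⟨k, hk⟩ : Fin m)
    · subst hj; rw [if_pos rfl]; exact hyp
    · rw [if_neg hj]; exact hf.1.2 j
  have hgne : g ≠ f := by
    intro h
    have := congrFun h ⟨k, hk⟩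
    simp only [hgdef, if_pos rfl] at this
    rw [this] at hp2
    omega
  obtain ⟨r, hr1, hr2⟩ := hf.2 g hgemb hgne
  by_cases hrk : r = (⟨k, hk⟩ : Fin m)
  · subst hrk
    simp only [hgdef, if_pos rfl] at hr2
    have := Fin.lt_def.1 hr2
    omega
  · simp only [hgdef, if_neg hrk] at hr2
    exact absurd hr2 (lt_irrefl _)

section Main

variable {x : Fin m → Bool}

lemma sum_aext (a : Fin m → ℕ) : ∑ j ∈ Finset.range m, aext a j = ∑ i, a i := by
  rw [← Fin.sum_univ_eq_sum_range (aext a) m]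
  exact Finset.sum_congr rfl fun i _ => by simp [aext_eq a i.isLt]

lemma pos_aext_last (a : Fin m → ℕ) (hm : 1 ≤ m) (hmn : m ≤ n) (hsum : ∑ i, a i = n - m) :
    pos (aext a) (m - 1) = n - 1 := by
  have h2 : m - 1 + 1 = m := by omega
  rw [pos, h2, sum_aext, hsum]
  omega

lemma hw_enc (a : Fin m → ℕ) (hm : 1 ≤ m) (hmn : m ≤ n) (hsum : ∑ i, a i = n - m) :
    hw (fun p : Fin n => enc (xe x) (aext a) ↑p)
      = hw x + ∑ i ∈ Finset.univ.filter (fun i => ¬(x i = true)), a i := by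
  classical
  have hn : 1 ≤ n := le_trans hm hmn
  have hpos := pos_aext_last a hm hmn hsum
  show (Finset.univ.filter fun p : Fin n => enc (xe x) (aext a) ↑p = true).card = _
  rw [enc_card (xe x) (aext a) hm hpos hn]
  have hconv : ∑ k ∈ Finset.range m, (if xe x k then 1 else aext a k)
      = ∑ i : Fin m, (if x i then 1 else a i) := by
    rw [← Fin.sum_univ_eq_sum_range (fun k => if xe x k then 1 else aext a k) m]
    exact Finset.sum_congr rfl fun i _ => by simp [xe_eq x i.isLt, aext_eq a i.isLt]
  rw [hconv, Finset.sum_ite]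
  simp [hw]

lemma enc_inj (hm : 1 ≤ m) (hmn : m ≤ n) (a b : Fin m → ℕ)
    (hsa : ∑ i, a i = n - m) (hsb : ∑ i, b i = n - m)
    (h : (fun p : Fin n => enc (xe x) (aext a) ↑p) = fun p : Fin n => enc (xe x) (aext b) ↑p) :
    a = b := by
  have hn : 1 ≤ n := le_trans hm hmn
  have hpa := pos_aext_last a hm hmn hsa
  have hpb := pos_aext_last b hm hmn hsb
  have hfa := enc_isInitial (x := x) (a := aext a) hm hpa hn
  have hfb := enc_isInitial (x := x) (a := aext b) hm hpb hn
  rw [h] at hfa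
  have hfeq := initial_unique hfa hfb
  have hposeq : ∀ k, k < m → pos (aext a) k = pos (aext b) k := by
    intro k hk
    have h1 := congrFun hfeq ⟨k, hk⟩
    simpa using congrArg Fin.val h1
  have haext : ∀ k, k < m → aext a k = aext b k := by
    intro k hk
    cases k with
    | zero =>
      have h1 := hposeq 0 hk
      rwa [pos_zero, pos_zero] at h1
    | succ k =>
      have h1 := hposeq (k + 1) hk
      have h2 := hposeq k (by omega)
      have ha := pos_succ (aext a) k
      have hb := pos_succ (aext b) k
      omega
  funext i
  have h1 := haext ↑i i.isLt
  simpa [aext_eq a i.isLt, aext_eq b i.isLt] using h1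

lemma enc_surj (hm : 1 ≤ m) (hmn : m ≤ n) (y : Fin n → Bool) (f : Fin m → Fin n)
    (hf : IsInitialEmbedding x y f) (hlast : (f ⟨m - 1, by omega⟩ : ℕ) = n - 1) :
    ∃ a : Fin m → ℕ, ∑ i, a i = n - m ∧ (fun p : Fin n => enc (xe x) (aext a) ↑p) = y := by
  classical
  have hn : 1 ≤ n := le_trans hm hmn
  set a : Fin m → ℕ := fun i =>
    if h : (i : ℕ) = 0 then ↑(f i) else ↑(f i) - ↑(f ⟨(i : ℕ) - 1, by omega⟩) - 1 with hadef
  have hposf : ∀ k (hk : k < m), pos (aext a) k = ↑(f ⟨k, hk⟩) := by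
    intro k
    induction k with
    | zero =>
      intro hk
      rw [pos_zero, aext_eq a hk]
      simp [hadef]
    | succ k ih =>
      intro hk
      have hk' : k < m := by omega
      have hlt : (f ⟨k, hk'⟩ : ℕ) < ↑(f ⟨k + 1, hk⟩) := hf.1.1 (Fin.mk_lt_mk.2 (by omega))
      have hval : a ⟨k + 1, hk⟩ = ↑(f ⟨k + 1, hk⟩) - ↑(f ⟨k, hk'⟩) - 1 := by
        simp [hadef]
      rw [pos_succ, ih hk', aext_eq a hk, hval]
      omega
  have hpos : pos (aext a) (m - 1) = n - 1 := by
    rw [hposf (m - 1) (by omega)]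
    exact hlast
  have hsum : ∑ i, a i = n - m := by
    have h2 : m - 1 + 1 = m := by omega
    have h1 : pos (aext a) (m - 1) = (m - 1) + ∑ i, a i := by
      rw [pos, h2, sum_aext]
    omega
  refine ⟨a, hsum, funext fun p => ?_⟩
  set k := idx (aext a) ↑p with hkdef
  have hk : k < m := by
    have h1 : (p : ℕ) ≤ pos (aext a) (m - 1) := by have := p.isLt; omega
    have := idx_le h1
    omega
  by_cases hpp : pos (aext a) k = ↑p
  · have hq : f ⟨k, hk⟩ = p := Fin.ext (by rw [← hposf k hk, hpp])
    show enc (xe x) (aext a) ↑p = y p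
    rw [enc, ← hkdef, if_pos hpp, xe_eq x hk, ← hq]
    exact (hf.1.2 ⟨k, hk⟩).symm
  · show enc (xe x) (aext a) ↑p = y p
    rw [enc, ← hkdef, if_neg hpp, xe_eq x hk]
    have hp2 : ↑p < (f ⟨k, hk⟩ : ℕ) := by
      have h1 := le_pos_idx (aext a) ↑p
      rw [← hkdef] at h1
      have := hposf k hk
      omega
    have hp1 : ∀ j (hj : j < k), (f ⟨j, by omega⟩ : ℕ) < ↑p := by
      intro j hj
      have h1 : pos (aext a) j < ↑p := pos_lt_of_lt_idx (aext a) ↑p (hkdef ▸ hj)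
      have := hposf j (by omega)
      omega
    have hgap := initial_gap hf k hk p hp2 hp1
    cases hyv : y p <;> cases hxv : x ⟨k, hk⟩ <;> simp_all

end Main

end MIC

lemma card_weak_comp (α : Type*) [Fintype α] [DecidableEq α] (s : ℕ) :
    Nat.card {f : α → ℕ // ∑ i, f i = s} = (Fintype.card α + s - 1).choose s := by
  have e : {M : Multiset α // Multiset.card M = s} ≃ {f : α → ℕ // ∑ i, f i = s} :=
    { toFun := fun M => ⟨fun i => M.1.count i, by
        rw [Multiset.sum_count_eq_card (fun a _ => mem_univ a), M.2]⟩
      invFun := fun f => ⟨∑ i : α, (f.1 i) • ({i} : Multiset α), by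
        calc Multiset.card (∑ i : α, f.1 i • ({i} : Multiset α))
            = ∑ i : α, Multiset.card (f.1 i • ({i} : Multiset α)) :=
              map_sum (⟨⟨Multiset.card, Multiset.card_zero⟩, Multiset.card_add⟩ : Multiset α →+ ℕ) _ univ
          _ = s := by simp [f.2]⟩
      left_inv := fun M => by
        ext1
        refine Multiset.ext.2 fun a => ?_
        simp [Multiset.count_sum', Multiset.count_singleton]
      right_inv := fun f => by
        ext i
        simp [Multiset.count_sum', Multiset.count_singleton] }
  have h1 : Nat.card {M : Multiset α // Multiset.card M = s} = Fintype.card (Sym α s) :=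
    Nat.card_eq_fintype_card (α := Sym α s)
  rw [← Nat.card_congr e, h1, Sym.card_sym_eq_choose]


open MIC

/-- The number of `y ∈ {0,1}^n` containing `x` as a subsequence, with Hamming weight
`h(x) + c`, and whose canonical embedding of `x` ends at the last position of `y`,
equals `C((n-m-c) + h(x) - 1, n-m-c) · C(c + (m - h(x)) - 1, c)`. -/
theorem maximal_initials_cluster_card (m n c : ℕ) (hm : 1 ≤ m) (hmn : m ≤ n)
    (hc : c ≤ n - m) (x : Fin m → Bool) :
    Nat.card {y : Fin n → Bool //
        (∃ f : Fin m → Fin n, IsInitialEmbedding x y f ∧ (f ⟨m - 1, by omega⟩ : ℕ) = n - 1) ∧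
        hw y = hw x + c} =
      ((n - m - c) + hw x - 1).choose (n - m - c) * (c + (m - hw x) - 1).choose c := by
  classical
  have hn : 1 ≤ n := le_trans hm hmn
  let A := {a : Fin m → ℕ //
    ∑ i ∈ Finset.univ.filter (fun i => x i = true), a i = n - m - c ∧
    ∑ i ∈ Finset.univ.filter (fun i => ¬(x i = true)), a i = c}
  have hsumtot : ∀ a : A, ∑ i, a.1 i = n - m := fun a => by
    have h1 := Finset.sum_filter_add_sum_filter_not Finset.univ (fun i => x i = true) a.1
    rw [a.2.1, a.2.2] at h1
    omega
  let F : A → {y : Fin n → Bool //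
      (∃ f : Fin m → Fin n, IsInitialEmbedding x y f ∧ (f ⟨m - 1, by omega⟩ : ℕ) = n - 1) ∧
      hw y = hw x + c} :=
    fun a => ⟨fun p : Fin n => enc (xe x) (aext a.1) ↑p, by
      constructor
      · refine ⟨fun i : Fin m =>
          ⟨pos (aext a.1) ↑i, pos_lt hm (pos_aext_last a.1 hm hmn (hsumtot a)) hn i.isLt⟩,
          enc_isInitial hm (pos_aext_last a.1 hm hmn (hsumtot a)) hn, ?_⟩
        show pos (aext a.1) (m - 1) = n - 1
        exact pos_aext_last a.1 hm hmn (hsumtot a)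
      · rw [hw_enc a.1 hm hmn (hsumtot a), a.2.2]⟩
  have hFbij : Function.Bijective F := by
    constructor
    · intro a b hab
      have h1 := congrArg Subtype.val hab
      exact Subtype.ext (enc_inj hm hmn a.1 b.1 (hsumtot a) (hsumtot b) h1)
    · rintro ⟨y, ⟨f, hf, hlast⟩, hwy⟩
      obtain ⟨a, hsum, henc⟩ := enc_surj hm hmn y f hf hlast
      have hW := hw_enc (x := x) a hm hmn hsum
      rw [henc, hwy] at hW
      have h2 : ∑ i ∈ Finset.univ.filter (fun i => ¬(x i = true)), a i = c := by omega
      have h1 : ∑ i ∈ Finset.univ.filter (fun i => x i = true), a i = n - m - c := by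
        have h3 := Finset.sum_filter_add_sum_filter_not Finset.univ (fun i => x i = true) a
        omega
      exact ⟨⟨a, h1, h2⟩, Subtype.ext henc⟩
  refine ((Nat.card_congr (Equiv.ofBijective F hFbij).symm).trans ?_)
  have e2 : A ≃ ({b : {i : Fin m // x i = true} → ℕ // ∑ i, b i = n - m - c} ×
      {b : {i : Fin m // ¬(x i = true)} → ℕ // ∑ i, b i = c}) :=
    { toFun := fun a =>
        (⟨fun t => a.1 t.1,
          (Finset.sum_subtype (Finset.univ.filter fun i => x i = true)
            (fun i => by simp) a.1).symm.trans a.2.1⟩,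
         ⟨fun t => a.1 t.1,
          (Finset.sum_subtype (Finset.univ.filter fun i => ¬(x i = true))
            (fun i => by simp) a.1).symm.trans a.2.2⟩)
      invFun := fun b =>
        ⟨fun i => if h : x i = true then b.1.1 ⟨i, h⟩ else b.2.1 ⟨i, h⟩, by
          constructor
          · exact (Finset.sum_subtype (Finset.univ.filter fun i => x i = true)
              (fun i => by simp)
              (fun i => if h : x i = true then b.1.1 ⟨i, h⟩ else b.2.1 ⟨i, h⟩)).trans
              ((Finset.sum_congr rfl fun t _ => dif_pos t.2).trans b.1.2)
          · exact (Finset.sum_subtype (Finset.univ.filter fun i => ¬(x i = true))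
              (fun i => by simp)
              (fun i => if h : x i = true then b.1.1 ⟨i, h⟩ else b.2.1 ⟨i, h⟩)).trans
              ((Finset.sum_congr rfl fun t _ => dif_neg t.2).trans b.2.2)⟩
      left_inv := fun a => Subtype.ext (funext fun i => by by_cases h : x i = true <;> simp [h])
      right_inv := fun b => by
        refine Prod.ext ?_ ?_
        · exact Subtype.ext (funext fun t => dif_pos t.2)
        · exact Subtype.ext (funext fun t => dif_neg t.2) }
  rw [Nat.card_congr e2, Nat.card_prod, card_weak_comp, card_weak_comp]
  have hc1 : Fintype.card {i : Fin m // x i = true} = hw x := by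
    rw [Fintype.card_subtype]; rfl
  have hc2 : Fintype.card {i : Fin m // ¬(x i = true)} = m - hw x := by
    rw [Fintype.card_subtype_compl, hc1, Fintype.card_fin]
  rw [hc1, hc2, Nat.add_comm (hw x), Nat.add_comm (m - hw x)]
end

section
/- For any two binary strings x, x' of length m with the same Hamming weight, and any n ≥ m and 0 ≤ c ≤ n−m, the number of y ∈ {0,1}^n containing x as a subsequence with h(y) = h(x) + c equals the number of y ∈ {0,1}^n containing x' as a subsequence with h(y) = h(x') + c. -/
/-!
Splitting off the first letter of `y` gives a recursion on `n` for the number of supersequences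
of `x` with `c` extra ones, driven by the first letter of `x`. Through it, every `x` has as many
supersequences as the sorted string `1^a 0^b` with the same numbers `a` of ones and `b` of zeros,
provided sorted strings satisfy the one identity that lets a leading `0` be traded for a leading
`1`; that identity follows from the recursion by its own induction on `n`.
-/

namespace Supersequence

instance finite_length_eq_and {α : Type*} [Finite α] (n : ℕ) (p : List α → Prop) :
    Finite {y : List α // y.length = n ∧ p y} :=
  ((List.finite_length_eq α n).subset fun _ hy => hy.1).to_subtype

def consEquiv {α : Type*} (n : ℕ) (p : List α → Prop) :
    {y : List α // y.length = n + 1 ∧ p y} ≃ Σ a : α, {y : List α // y.length = n ∧ p (a :: y)}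
    where
  toFun
    | ⟨a :: t, h⟩ => ⟨a, t, by simpa using h⟩
  invFun
    | ⟨a, t, h⟩ => ⟨a :: t, by simpa using h⟩
  left_inv
    | ⟨a :: _, _⟩ => rfl
  right_inv _ := rfl

theorem card_length_succ_and {α : Type*} [Fintype α] (n : ℕ) (p : List α → Prop) :
    Nat.card {y : List α // y.length = n + 1 ∧ p y} =
      ∑ a, Nat.card {y : List α // y.length = n ∧ p (a :: y)} := by
  rw [Nat.card_congr (consEquiv n p), Nat.card_sigma]

theorem card_length_eq_congr {α : Type*} {n : ℕ} {p q : List α → Prop}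
    (h : ∀ y : List α, y.length = n → (p y ↔ q y)) :
    Nat.card {y : List α // y.length = n ∧ p y} = Nat.card {y : List α // y.length = n ∧ q y} :=
  Nat.card_congr <| Equiv.subtypeEquivRight fun y => and_congr_right (h y)

/-- The cardinality of `Υ^c_{n,x}`. -/
noncomputable def count (x : List Bool) (n c : ℕ) : ℕ :=
  Nat.card {y : List Bool // y.length = n ∧ x.Sublist y ∧ y.count true = x.count true + c}

theorem count_zero_of_ne_nil {x : List Bool} (hx : x ≠ []) (c : ℕ) : count x 0 c = 0 := by
  rw [count, Nat.card_eq_zero]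
  exact Or.inl ⟨fun ⟨y, hy, hxy, _⟩ =>
    hx <| List.sublist_nil.mp (List.length_eq_zero_iff.mp hy ▸ hxy)⟩

theorem count_true_cons_succ (x : List Bool) (n c : ℕ) :
    count (true :: x) (n + 1) c = count x n c + count (true :: x) n c := by
  rw [count, card_length_succ_and, Fintype.sum_bool]
  congr 1 <;> refine card_length_eq_congr fun y _ => ?_
  · simp only [List.cons_sublist_cons, List.count_cons_self]
    exact and_congr_right fun _ => by omega
  · simp [List.cons_sublist_cons']

theorem count_false_cons_succ (x : List Bool) (n c : ℕ) :
    count (false :: x) (n + 1) c =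
      count x n c + if c = 0 then 0 else count (false :: x) n (c - 1) := by
  rw [count, card_length_succ_and, Fintype.sum_bool, add_comm]
  congr 1
  · refine card_length_eq_congr fun y _ => ?_
    simp [List.cons_sublist_cons]
  · split_ifs with hc
    · refine Nat.card_eq_zero.mpr <| Or.inl ⟨fun ⟨y, _, hxy, hy⟩ => ?_⟩
      -- `false :: x` must then embed into `y`, which has fewer ones than `x`
      have hle := (List.cons_sublist_cons'.mp hxy).resolve_right (by simp) |>.count_le true
      simp only [List.count_cons_self, ne_eq, Bool.false_eq_true, not_false_eq_true,
        List.count_cons_of_ne, hc, add_zero] at hy hle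
      omega
    · refine card_length_eq_congr fun y _ => ?_
      simp only [List.cons_sublist_cons', Bool.false_eq_true, false_and, or_false,
        List.count_cons_self, ne_eq, not_false_eq_true, List.count_cons_of_ne, and_congr_right_iff]
      omega

def sorted (a b : ℕ) : List Bool :=
  List.replicate a true ++ List.replicate b false

theorem length_sorted (a b : ℕ) : (sorted a b).length = a + b := by
  simp [sorted]

theorem sorted_succ_left (a b : ℕ) : sorted (a + 1) b = true :: sorted a b := rfl

theorem sorted_zero_succ (b : ℕ) : sorted 0 (b + 1) = false :: sorted 0 b := rfl

/-- Both sides count the supersequences of length `n + 1` of a string with `a + 1` ones and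
`b + 1` zeros, starting with `1` on the left and with `0` on the right. -/
theorem count_sorted_exchange (n a b c : ℕ) :
    count (sorted a (b + 1)) n c + count (sorted (a + 1) (b + 1)) n c =
      count (sorted (a + 1) b) n c +
        if c = 0 then 0 else count (sorted (a + 1) (b + 1)) n (c - 1) := by
  induction n generalizing a with
  | zero =>
    simp [count_zero_of_ne_nil, sorted]
  | succ n ih =>
    cases a with
    | zero =>
      have := ih 0
      simp only [sorted_succ_left, sorted_zero_succ, count_true_cons_succ,
        count_false_cons_succ] at this ⊢
      split_ifs at this ⊢ <;> omega
    | succ a =>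
      have h₁ := ih a
      have h₂ := ih (a + 1)
      simp only [sorted_succ_left, count_true_cons_succ] at h₁ h₂ ⊢
      split_ifs at h₁ h₂ ⊢ <;> omega

theorem count_eq_count_sorted (n : ℕ) (x : List Bool) (c : ℕ) :
    count x n c = count (sorted (x.count true) (x.count false)) n c := by
  induction n generalizing x c with
  | zero =>
    rcases eq_or_ne x [] with rfl | hx
    · rfl
    rw [count_zero_of_ne_nil hx, count_zero_of_ne_nil]
    rw [← List.length_pos_iff, length_sorted, List.count_true_add_count_false]
    exact List.length_pos_iff.mpr hx
  | succ n ih =>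
    cases x with
    | nil => rfl
    | cons b x =>
      cases b with
      | true =>
        rw [count_true_cons_succ, ih x, ih (true :: x)]
        simp only [List.count_cons_self, List.count_cons_of_ne (by decide : true ≠ false),
          sorted_succ_left, count_true_cons_succ]
      | false =>
        rw [count_false_cons_succ, ih x, ih (false :: x)]
        simp only [List.count_cons_self, List.count_cons_of_ne (by decide : false ≠ true)]
        generalize x.count true = a
        cases a with
        | zero => rw [sorted_zero_succ, count_false_cons_succ]
        | succ a =>
          rw [sorted_succ_left a (x.count false + 1), count_true_cons_succ, ← sorted_succ_left,
            count_sorted_exchange]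

end Supersequence

theorem cluster_card_hamming_invariant_general (m n c : ℕ)
    (x x' : List Bool) (hx : x.length = m) (hx' : x'.length = m)
    (hh : x.count true = x'.count true) :
    Nat.card {y : List Bool // y.length = n ∧ x.Sublist y ∧
        y.count true = x.count true + c} =
    Nat.card {y : List Bool // y.length = n ∧ x'.Sublist y ∧
        y.count true = x'.count true + c} := by
  have hzeros : x.count false = x'.count false := by
    have := List.count_true_add_count_false x
    have := List.count_true_add_count_false x'
    omega
  change Supersequence.count x n c = Supersequence.count x' n c
  rw [Supersequence.count_eq_count_sorted, Supersequence.count_eq_count_sorted n x', hh, hzeros]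

/-- Two strings of the same length and the same Hamming weight have, for every
`0 ≤ c ≤ n - m`, the same number of supersequences of length `n` with `c` extra ones. -/
theorem cluster_card_hamming_invariant (m n c : ℕ) (hmn : m ≤ n) (hc : c ≤ n - m)
    (x x' : List Bool) (hx : x.length = m) (hx' : x'.length = m)
    (hh : x.count true = x'.count true) :
    Nat.card {y : List Bool // y.length = n ∧ x.Sublist y ∧
        y.count true = x.count true + c} =
    Nat.card {y : List Bool // y.length = n ∧ x'.Sublist y ∧
        y.count true = x'.count true + c} :=
  cluster_card_hamming_invariant_general m n c x x' hx hx' hh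
end

section
/- For x ∈ {0,1}^m with Hamming weight h(x) = a ≥ 1, n ≥ m, and 0 ≤ c ≤ n−m, the number of y ∈ {0,1}^n containing x as a subsequence with Hamming weight a + c equals the sum over p from a to a + z of binomial(p−1, a−1) · binomial(n−p, c), where z = n − m − c. -/
/-!
A string `x` embeds into `b :: y` iff either `b` is the head of `x` and the tail of `x` embeds
into `y`, or `x` itself embeds into `y`. Splitting the supersequences by their first letter thus
gives recurrences for `|Υ^c_{n,x}|` that only look at the head of `x`; combined with invariance
under reversal they show that `|Υ^c_{n,x}|` depends only on the numbers `a` of ones and `s` of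
zeros of `x`, so `x` may be replaced by `1^a 0^s`. For that string the sum counts `y` by the
position `p` of its `a`-th one: `a - 1` ones lie before `p` and `c` after it, and `x` embeds iff
at least `s` zeros follow `p`, i.e. `p ≤ n - s - c`. Formally, the first-letter recurrence for
`1^a 0^s` becomes Pascal's rule on the factor `C(p-1, a-1)`.
-/

open List Finset

namespace List

variable {α : Type*}

instance finite_subtype_length_eq [Finite α] (n : ℕ) (P : List α → Prop) :
    Finite {l : List α // l.length = n ∧ P l} :=
  ((finite_length_eq α n).subset fun _ h => h.1).to_subtype

theorem card_subtype_length_zero (P : List α → Prop) [Decidable (P [])] :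
    Nat.card {l : List α // l.length = 0 ∧ P l} = if P [] then 1 else 0 := by
  split_ifs with h
  · exact Nat.card_eq_one_iff_exists.2 ⟨⟨[], rfl, h⟩, fun ⟨l, hl, _⟩ => by
      simp [length_eq_zero_iff.1 hl]⟩
  · have : IsEmpty {l : List α // l.length = 0 ∧ P l} :=
      ⟨fun ⟨l, hl, hP⟩ => h (length_eq_zero_iff.1 hl ▸ hP)⟩
    exact Nat.card_of_isEmpty

theorem card_subtype_length_succ [Fintype α] (n : ℕ) (P : List α → Prop) :
    Nat.card {l : List α // l.length = n + 1 ∧ P l} =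
      ∑ a : α, Nat.card {l : List α // l.length = n ∧ P (a :: l)} := by
  rw [← Nat.card_sigma]
  refine (Nat.card_eq_of_bijective
    (fun p : Σ a : α, {l : List α // l.length = n ∧ P (a :: l)} =>
      (⟨p.1 :: p.2.1, by simp [p.2.2.1], p.2.2.2⟩ : {l : List α // l.length = n + 1 ∧ P l}))
    ⟨?_, ?_⟩).symm
  · rintro ⟨a, l, _⟩ ⟨b, k, _⟩ h
    simp only [Subtype.mk.injEq, cons.injEq] at h
    obtain ⟨rfl, rfl⟩ := h
    rfl
  · rintro ⟨_ | ⟨a, l⟩, hl, hP⟩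
    · simp at hl
    · exact ⟨⟨a, l, by simpa using hl, hP⟩, rfl⟩

theorem cons_sublist_cons_iff_of_ne {a b : α} {l₁ l₂ : List α} (h : a ≠ b) :
    a :: l₁ <+ b :: l₂ ↔ a :: l₁ <+ l₂ :=
  ⟨Sublist.of_cons_of_ne h, Sublist.cons b⟩

theorem card_subtype_length_count_true (n c : ℕ) :
    Nat.card {y : List Bool // y.length = n ∧ y.count true = c} = n.choose c := by
  induction n generalizing c with
  | zero => cases c <;> rw [card_subtype_length_zero] <;> simp
  | succ n ih =>
    rw [card_subtype_length_succ, Fintype.sum_bool]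
    cases c with
    | zero => simp [ih]
    | succ c => simp [ih, Nat.choose_succ_succ']

end List

noncomputable def clusterCard (n : ℕ) (x : List Bool) (c : ℕ) : ℕ :=
  Nat.card {y : List Bool // y.length = n ∧ x <+ y ∧ y.count true = x.count true + c}

theorem clusterCard_eq_zero_of_lt {n : ℕ} {x : List Bool} {c : ℕ} (h : n < x.length + c) :
    clusterCard n x c = 0 := by
  have : IsEmpty {y : List Bool // y.length = n ∧ x <+ y ∧ y.count true = x.count true + c} := by
    refine ⟨fun ⟨y, hy, hxy, hcount⟩ => ?_⟩
    have := hxy.count_le false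
    rw [← count_true_add_count_false x, ← hy, ← count_true_add_count_false y] at h
    omega
  exact Nat.card_of_isEmpty

theorem clusterCard_succ_cons_true (n : ℕ) (x : List Bool) (c : ℕ) :
    clusterCard (n + 1) (true :: x) c = clusterCard n x c + clusterCard n (true :: x) c := by
  rw [clusterCard, card_subtype_length_succ, Fintype.sum_bool]
  congr 1 <;> exact Nat.card_congr <| Equiv.subtypeEquivRight fun y => by
    simp [cons_sublist_cons_iff_of_ne, add_right_comm _ 1]

theorem clusterCard_succ_cons_false_succ (n : ℕ) (x : List Bool) (c : ℕ) :
    clusterCard (n + 1) (false :: x) (c + 1) =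
      clusterCard n (false :: x) c + clusterCard n x (c + 1) := by
  rw [clusterCard, card_subtype_length_succ, Fintype.sum_bool]
  congr 1 <;> exact Nat.card_congr <| Equiv.subtypeEquivRight fun y => by
    simp [cons_sublist_cons_iff_of_ne, ← add_assoc]

theorem clusterCard_succ_cons_false_zero (n : ℕ) (x : List Bool) :
    clusterCard (n + 1) (false :: x) 0 = clusterCard n x 0 := by
  rw [clusterCard, card_subtype_length_succ, Fintype.sum_bool]
  have : IsEmpty {l : List Bool // l.length = n ∧ false :: x <+ true :: l ∧
      (true :: l).count true = (false :: x).count true + 0} :=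
    ⟨fun ⟨l, _, hxl, hl⟩ => by
      have := (hxl.of_cons_of_ne Bool.false_ne_true).count_le true
      simp at hl this
      omega⟩
  rw [Nat.card_of_isEmpty, zero_add]
  exact Nat.card_congr <| Equiv.subtypeEquivRight fun y => by simp

theorem clusterCard_reverse (n : ℕ) (x : List Bool) (c : ℕ) :
    clusterCard n x.reverse c = clusterCard n x c :=
  Nat.card_congr <| Equiv.subtypeEquiv (Function.Involutive.toPerm _ reverse_involutive)
    fun y => by simp [sublist_reverse_iff]

theorem clusterCard_succ_concat_false_succ (n : ℕ) (x : List Bool) (c : ℕ) :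
    clusterCard (n + 1) (x ++ [false]) (c + 1) =
      clusterCard n (x ++ [false]) c + clusterCard n x (c + 1) := by
  have h : (x ++ [false]).reverse = false :: x.reverse := by simp
  rw [← clusterCard_reverse, h, clusterCard_succ_cons_false_succ, ← h, clusterCard_reverse,
    clusterCard_reverse]

theorem clusterCard_succ_concat_false_zero (n : ℕ) (x : List Bool) :
    clusterCard (n + 1) (x ++ [false]) 0 = clusterCard n x 0 := by
  rw [← clusterCard_reverse, reverse_concat', clusterCard_succ_cons_false_zero,
    clusterCard_reverse]

def onesThenZeros (a s : ℕ) : List Bool := replicate a true ++ replicate s false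

@[simp] theorem length_onesThenZeros (a s : ℕ) : (onesThenZeros a s).length = a + s := by
  simp [onesThenZeros]

theorem onesThenZeros_succ_left (a s : ℕ) :
    onesThenZeros (a + 1) s = true :: onesThenZeros a s := rfl

theorem onesThenZeros_succ_right (a s : ℕ) :
    onesThenZeros a (s + 1) = onesThenZeros a s ++ [false] := by
  simp [onesThenZeros, replicate_succ']

theorem clusterCard_eq_clusterCard_onesThenZeros (n : ℕ) (x : List Bool) (c : ℕ) :
    clusterCard n x c = clusterCard n (onesThenZeros (x.count true) (x.count false)) c := by
  induction n generalizing x c with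
  | zero =>
    rcases x with _ | ⟨b, x⟩
    · rfl
    · rw [clusterCard_eq_zero_of_lt (by simp), clusterCard_eq_zero_of_lt]
      simp [count_true_add_count_false]
  | succ n ih =>
    rcases x with _ | ⟨_ | _, x⟩
    · rfl
    · rcases c with _ | c
      · rw [clusterCard_succ_cons_false_zero, ih]
        simp [onesThenZeros_succ_right, clusterCard_succ_concat_false_zero]
      · rw [clusterCard_succ_cons_false_succ, ih x, ih (false :: x)]
        simp [onesThenZeros_succ_right, clusterCard_succ_concat_false_succ]
    · rw [clusterCard_succ_cons_true, ih x, ih (true :: x)]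
      simp [onesThenZeros_succ_left, clusterCard_succ_cons_true]

theorem clusterCard_replicate_false {n s c : ℕ} (h : s + c ≤ n) :
    clusterCard n (replicate s false) c = n.choose c := by
  rw [clusterCard, ← card_subtype_length_count_true]
  refine Nat.card_congr <| Equiv.subtypeEquivRight fun y => ?_
  simp [replicate_sublist_iff, count_replicate]
  rintro rfl
  have := count_true_add_count_false y
  omega

/-- The closed form for `1^(a+1) 0^s`, indexed by the 0-based position `q = p - 1` of the
`(a+1)`-st one. -/
def clusterSum (n a s c : ℕ) : ℕ :=
  ∑ q ∈ range (n - s - c), q.choose a * (n - 1 - q).choose c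

theorem clusterSum_succ_succ (n a s c : ℕ) :
    clusterSum (n + 1) (a + 1) s c = clusterSum n a s c + clusterSum n (a + 1) s c := by
  rw [clusterSum, clusterSum, clusterSum, ← sum_add_distrib]
  rcases le_or_gt (s + c) n with h | h
  · rw [show n + 1 - s - c = n - s - c + 1 by omega, Finset.sum_range_succ']
    simp only [Nat.choose_succ_succ', add_mul, Nat.choose_zero_succ, zero_mul, add_zero]
    refine sum_congr rfl fun q _ => ?_
    rw [show n + 1 - 1 - (q + 1) = n - 1 - q by omega]
  · simp [show n + 1 - s - c = 0 by omega, show n - s - c = 0 by omega]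

theorem clusterSum_succ_zero (n s c : ℕ) :
    clusterSum (n + 1) 0 s c = clusterSum n 0 s c + if s + c ≤ n then n.choose c else 0 := by
  rw [clusterSum, clusterSum]
  split_ifs with h
  · rw [show n + 1 - s - c = n - s - c + 1 by omega, Finset.sum_range_succ']
    simp only [Nat.choose_zero_right, one_mul, Nat.add_sub_cancel, Nat.sub_zero]
    congr 1
    refine sum_congr rfl fun q _ => ?_
    rw [show n - (q + 1) = n - 1 - q by omega]
  · simp [show n + 1 - s - c = 0 by omega, show n - s - c = 0 by omega]

theorem clusterCard_onesThenZeros (n a s c : ℕ) :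
    clusterCard n (onesThenZeros (a + 1) s) c = clusterSum n a s c := by
  induction n generalizing a with
  | zero => simp [clusterCard_eq_zero_of_lt, clusterSum]
  | succ n ih =>
    rw [onesThenZeros_succ_left, clusterCard_succ_cons_true, ← onesThenZeros_succ_left, ih]
    rcases a with _ | a
    · rw [clusterSum_succ_zero, add_comm]
      split_ifs with h
      · rw [show onesThenZeros 0 s = replicate s false from rfl, clusterCard_replicate_false h]
      · rw [clusterCard_eq_zero_of_lt (by simp; omega)]
    · rw [ih, clusterSum_succ_succ]

theorem clusterSum_eq_sum_Icc (n a s c : ℕ) :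
    clusterSum n a s c =
      ∑ p ∈ Icc (a + 1) (n - s - c), (p - 1).choose a * (n - p).choose c := by
  rw [clusterSum, ← Ico_add_one_right_eq_Icc, ← sum_Ico_add']
  refine (sum_subset (fun q hq => ?_) fun q hq hq' => ?_).symm.trans
    (sum_congr rfl fun q _ => ?_)
  · simp at hq ⊢
    omega
  · simp at hq hq'
    rw [Nat.choose_eq_zero_of_lt (by omega), zero_mul]
  · rw [Nat.add_sub_cancel, show n - (q + 1) = n - 1 - q by omega]

/-- Closed form for the size of a cluster: for `x` of length `m` with Hamming weight
`a ≥ 1`, the number of supersequences of length `n` with Hamming weight `a + c` equals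
`∑_{p=a}^{a+z} C(p-1, a-1) · C(n-p, c)` where `z = n - m - c`. -/
theorem cluster_card_closed_form (m n c : ℕ) (hmn : m ≤ n) (hc : c ≤ n - m)
    (x : List Bool) (hx : x.length = m) (ha : 1 ≤ x.count true) :
    Nat.card {y : List Bool // y.length = n ∧ x.Sublist y ∧
        y.count true = x.count true + c} =
      ∑ p ∈ Finset.Icc (x.count true) (x.count true + (n - m - c)),
        (p - 1).choose (x.count true - 1) * (n - p).choose c := by
  obtain ⟨a, hxa⟩ : ∃ a, x.count true = a + 1 := ⟨_, (Nat.sub_add_cancel ha).symm⟩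
  have hm : a + 1 + x.count false = m := by rw [← hxa, count_true_add_count_false, hx]
  change clusterCard n x c = _
  rw [clusterCard_eq_clusterCard_onesThenZeros, hxa, clusterCard_onesThenZeros,
    clusterSum_eq_sum_Icc, Nat.add_sub_cancel,
    show n - x.count false - c = a + 1 + (n - m - c) by omega]
end

section
/- Let x be a binary string of length m with run-length structure given by runs of 1's and 0's, and define ρ_1(x) and ρ_0(x) as follows: ρ_α(x) is the sum over all maximal runs r of symbol α in x of f(r), where f(r) = |r|+1 if r spans all of x, f(r) = |r| if r touches exactly one endpoint of x, and f(r) = |r|−1 otherwise. Then for n ≥ m, the number of y ∈ {0,1}^n with ω_x(y) = 1 (singletons) equals binomial(n − m + ρ_1(x) + ρ_0(x) − 1, n − m). -/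
/-!
Read a singleton `y` of `x` from left to right along its unique embedding. Every letter of `y`
outside the embedding must differ from the next letter of `x` (else the match could move left)
and from the last matched letter (else that match could move right). Over `{0,1}` this forces
the inserted letter and allows insertions only at the start, at the end, and between two equal
consecutive letters of `x`: that is `ρ₁(x) + ρ₀(x) = m - ℓ + 2` slots. A singleton of length `n`
is thus a distribution of `n - m` letters into these slots, counted by a multichoose number.
-/

open List

section Sublists

variable {α : Type*} [DecidableEq α]

theorem count_sublists_cons (b : α) (x y : List α) :
    (b :: y).sublists.count x = y.sublists.count x + (y.sublists.map (cons b)).count x := by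
  rw [(sublists_perm_sublists' _).count_eq, sublists'_cons, count_append,
    ((sublists_perm_sublists' y).map _).count_eq, (sublists_perm_sublists' y).count_eq]

theorem count_nil_sublists (y : List α) : y.sublists.count [] = 1 := by
  induction y with
  | nil => rfl
  | cons b y ih => simp [count_sublists_cons, ih, count_eq_zero]

theorem count_cons_sublists_cons (a b : α) (x y : List α) :
    (b :: y).sublists.count (a :: x) =
      y.sublists.count (a :: x) + if a = b then y.sublists.count x else 0 := by
  rw [count_sublists_cons]
  split_ifs with hab
  · rw [hab, count_map_of_injective _ _ cons_injective]
  · simp [count_eq_zero, Ne.symm hab]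

theorem count_sublists_pos_iff {x y : List α} : 0 < y.sublists.count x ↔ x <+ y := by
  rw [count_pos_iff, mem_sublists]

theorem two_le_count_sublists_of_cons_cons_sublist {a : α} {x y : List α}
    (h : a :: a :: x <+ y) : 2 ≤ y.sublists.count (a :: x) := by
  induction y with
  | nil => simp at h
  | cons b y ih =>
    rw [count_cons_sublists_cons]
    cases h with
    | cons _ h => have := ih h; omega
    | cons_cons _ h =>
      have h₁ := count_sublists_pos_iff.2 h
      have h₂ := count_sublists_pos_iff.2 ((sublist_cons_self a x).trans h)
      rw [if_pos rfl]
      omega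

end Sublists

/-- `p` is the letter matched just before `y`: besides `x` embedding uniquely into `y`, that
match may not be moved into `y`. -/
def IsSingletonAfter (p : Bool) (x y : List Bool) : Prop :=
  y.sublists.count x = 1 ∧ ¬ p :: x <+ y

namespace IsSingletonAfter

theorem length_le {p : Bool} {x y : List Bool} (h : IsSingletonAfter p x y) :
    x.length ≤ y.length :=
  (count_sublists_pos_iff.1 (h.1 ▸ Nat.one_pos)).length_le

theorem nil_left_iff {p : Bool} {y : List Bool} : IsSingletonAfter p [] y ↔ p ∉ y := by
  simp [IsSingletonAfter, count_nil_sublists]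

theorem cons_cons_self_iff {p b : Bool} {x y : List Bool} :
    IsSingletonAfter p (b :: x) (b :: y) ↔ IsSingletonAfter b x y := by
  unfold IsSingletonAfter
  rw [count_cons_sublists_cons, if_pos rfl, sublist_cons_iff]
  have h₁ := @count_sublists_pos_iff _ _ (b :: x) y
  have h₂ := @count_sublists_pos_iff _ _ x y
  constructor
  · rintro ⟨hc, -⟩
    have hbx : ¬ b :: x <+ y := fun h => by
      have := h₁.2 h
      have := h₂.2 ((sublist_cons_self b x).trans h)
      omega
    have := mt h₁.1 hbx
    exact ⟨by omega, hbx⟩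
  · rintro ⟨hc, hbx⟩
    have := mt h₁.1 hbx
    refine ⟨by omega, ?_⟩
    rintro (h | ⟨r, hr, h⟩)
    · exact hbx ((sublist_cons_self p _).trans h)
    · exact hbx ((cons.inj hr).2 ▸ h)

theorem cons_cons_of_ne {p b c : Bool} {x y : List Bool} (hbc : b ≠ c) :
    IsSingletonAfter p (b :: x) (c :: y) ↔ b = p ∧ IsSingletonAfter p (b :: x) y := by
  unfold IsSingletonAfter
  rw [count_cons_sublists_cons, if_neg hbc, add_zero, sublist_cons_iff]
  constructor
  · rintro ⟨hc, hp⟩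
    have hpc : p ≠ c := fun hpc =>
      hp (Or.inr ⟨_, by rw [hpc], count_sublists_pos_iff.1 (by omega)⟩)
    refine ⟨by cases b <;> cases c <;> cases p <;> simp_all, hc, fun h => hp (Or.inl h)⟩
  · rintro ⟨rfl, hc, hp⟩
    refine ⟨hc, ?_⟩
    rintro (h | ⟨r, hr, -⟩)
    · exact hp h
    · exact hbc (cons.inj hr).1

end IsSingletonAfter

theorem count_sublists_eq_one_iff {a : Bool} {x y : List Bool} :
    y.sublists.count (a :: x) = 1 ↔ IsSingletonAfter a (a :: x) y :=
  ⟨fun h => ⟨h, fun hs => by have := two_le_count_sublists_of_cons_cons_sublist hs; omega⟩,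
    And.left⟩

instance {α : Type*} [Finite α] (n : ℕ) (P : List α → Prop) :
    Finite {y : List α // y.length = n ∧ P y} :=
  ((List.finite_length_eq α n).subset fun _ h => h.1).to_subtype

theorem Nat.card_length_succ {α : Type*} [Fintype α] (P : List α → Prop) (n : ℕ) :
    Nat.card {y : List α // y.length = n + 1 ∧ P y} =
      ∑ c, Nat.card {y : List α // y.length = n ∧ P (c :: y)} := by
  rw [← Nat.card_sigma]
  refine (Nat.card_eq_of_bijective
    (fun z => ⟨z.1 :: z.2.1, by simp [z.2.2.1], z.2.2.2⟩) ⟨?_, ?_⟩).symm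
  · rintro ⟨c, y, _⟩ ⟨c', y', _⟩ h
    obtain ⟨rfl, rfl⟩ := cons.inj (congrArg Subtype.val h)
    rfl
  · rintro ⟨_ | ⟨c, y⟩, hl, hP⟩
    · simp at hl
    · exact ⟨⟨c, y, by simpa using hl, hP⟩, rfl⟩

theorem card_isSingletonAfter_of_lt {p : Bool} {x : List Bool} {n : ℕ} (h : n < x.length) :
    Nat.card {y : List Bool // y.length = n ∧ IsSingletonAfter p x y} = 0 :=
  Nat.card_eq_zero.2 (Or.inl ⟨fun y => by have := y.2.2.length_le; omega⟩)

theorem card_isSingletonAfter_nil (p : Bool) (n : ℕ) :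
    Nat.card {y : List Bool // y.length = n ∧ IsSingletonAfter p [] y} = 1 := by
  refine Nat.card_eq_one_iff_exists.2
    ⟨⟨replicate n !p, by simp [IsSingletonAfter.nil_left_iff]⟩, ?_⟩
  rintro ⟨y, hl, hy⟩
  rw [IsSingletonAfter.nil_left_iff] at hy
  ext1
  exact eq_replicate_iff.2 ⟨hl, fun c hc => by cases c <;> cases p <;> simp_all⟩

theorem card_isSingletonAfter_cons_succ (p b : Bool) (x : List Bool) (n : ℕ) :
    Nat.card {y : List Bool // y.length = n + 1 ∧ IsSingletonAfter p (b :: x) y} =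
      Nat.card {y : List Bool // y.length = n ∧ IsSingletonAfter b x y} +
        if b = p then Nat.card {y : List Bool // y.length = n ∧ IsSingletonAfter p (b :: x) y}
        else 0 := by
  rw [Nat.card_length_succ, Fintype.sum_bool]
  cases b <;> cases p <;>
    simp [IsSingletonAfter.cons_cons_self_iff, IsSingletonAfter.cons_cons_of_ne, add_comm]

/-- The number of places where letters can be inserted into `x`, read after a matched `p`,
without creating a second embedding: before each letter equal to its predecessor, and at the
end. -/
def slots : Bool → List Bool → ℕ
  | _, [] => 1
  | p, b :: x => slots b x + if b = p then 1 else 0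

theorem card_isSingletonAfter (p : Bool) (x : List Bool) (t : ℕ) :
    Nat.card {y : List Bool // y.length = x.length + t ∧ IsSingletonAfter p x y} =
      (slots p x).multichoose t := by
  induction x generalizing p t with
  | nil => simp [slots, card_isSingletonAfter_nil]
  | cons b x ih =>
    rw [length_cons, add_right_comm, card_isSingletonAfter_cons_succ, ih, slots]
    by_cases hbp : b = p
    · subst hbp
      simp only [↓reduceIte]
      induction t with
      | zero =>
        simp [card_isSingletonAfter_of_lt, Nat.multichoose_zero_right]
      | succ t iht =>
        rw [← add_assoc, card_isSingletonAfter_cons_succ, if_pos rfl, ih, iht,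
          Nat.multichoose_succ_succ]
    · simp [hbp]

theorem slots_replicate_append (p c : Bool) (j : ℕ) (z : List Bool) :
    slots p (replicate (j + 1) c ++ z) = slots c z + j + if c = p then 1 else 0 := by
  induction j generalizing p with
  | zero => simp [slots]
  | succ j ih =>
    rw [replicate_succ, cons_append, slots, ih, if_pos rfl]
    omega

theorem slots_flatten_ofFn_replicate (ℓ : ℕ) (a : Fin (ℓ + 1) → Bool) (k : Fin (ℓ + 1) → ℕ)
    (halt : ∀ i : Fin ℓ, a i.castSucc ≠ a i.succ) (hk : ∀ i, 1 ≤ k i) (p : Bool) :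
    slots p (ofFn fun i => replicate (k i) (a i)).flatten =
      ∑ i, (k i - 1) + 1 + if a 0 = p then 1 else 0 := by
  induction ℓ generalizing p with
  | zero =>
    obtain ⟨j, hj⟩ : ∃ j, k 0 = j + 1 := ⟨k 0 - 1, by have := hk 0; omega⟩
    rw [ofFn_succ, ofFn_zero, flatten_cons, flatten_nil, hj, slots_replicate_append,
      Fin.sum_univ_one, hj]
    simp only [slots]
    omega
  | succ ℓ ih =>
    obtain ⟨j, hj⟩ : ∃ j, k 0 = j + 1 := ⟨k 0 - 1, by have := hk 0; omega⟩
    rw [ofFn_succ, flatten_cons, hj, slots_replicate_append,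
      ih (fun i => a i.succ) (fun i => k i.succ) (fun i => halt i.succ) (fun i => hk i.succ),
      Fin.sum_univ_succ (f := fun i => k i - 1), hj,
      if_neg (show a (Fin.succ 0) ≠ a 0 from (halt 0).symm)]
    omega

theorem sum_runWeights (ℓ : ℕ) (k : Fin (ℓ + 1) → ℕ) (hk : ∀ i, 1 ≤ k i) :
    ∑ i : Fin (ℓ + 1),
        (if ℓ + 1 = 1 then k i + 1 else if i.1 = 0 ∨ i.1 = ℓ + 1 - 1 then k i else k i - 1) =
      ∑ i, (k i - 1) + 2 := by
  rcases ℓ with _ | ℓ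
  · rw [Fin.sum_univ_one, Fin.sum_univ_one, if_pos rfl]
    have := hk 0
    omega
  · have hterm : ∀ i : Fin (ℓ + 2),
        (if ℓ + 2 = 1 then k i + 1 else if i.1 = 0 ∨ i.1 = ℓ + 2 - 1 then k i else k i - 1) =
          (k i - 1) + ((if i = 0 then 1 else 0) + if i = Fin.last _ then 1 else 0) := by
      intro i
      have := hk i
      rcases i with ⟨i, hi⟩
      simp only [Fin.ext_iff, Fin.val_zero, Fin.val_last]
      split_ifs <;> omega
    simp only [hterm, Finset.sum_add_distrib, Finset.sum_ite_eq', Finset.mem_univ, if_true]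

/-- Enumerating singletons: let `x` have run-length encoding `(k_1, …, k_ℓ)` with
alternating symbols `a_i`, and for `α ∈ {0,1}` let `ρ α` be the sum over runs of
symbol `α` of: `k_i + 1` if the run is all of `x`, `k_i` if it touches exactly one
endpoint, and `k_i - 1` otherwise. Then the number of `y ∈ {0,1}^n` with exactly one
embedding of `x` is `C(n - m + ρ 1 + ρ 0 - 1, n - m)`. -/
theorem singleton_count (ℓ : ℕ) (hl : 1 ≤ ℓ) (a : Fin ℓ → Bool) (k : Fin ℓ → ℕ)
    (halt : ∀ i : Fin ℓ, ∀ h : i.1 + 1 < ℓ, a i ≠ a ⟨i.1 + 1, h⟩)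
    (hk : ∀ i, 1 ≤ k i) (m n : ℕ) (hm : ∑ i, k i = m) (hmn : m ≤ n)
    (x : List Bool) (hx : x = (List.ofFn fun i => List.replicate (k i) (a i)).flatten)
    (ρ : Bool → ℕ)
    (hρ : ∀ b : Bool, ρ b = ∑ i ∈ Finset.univ.filter (fun i : Fin ℓ => a i = b),
        (if ℓ = 1 then k i + 1 else if i.1 = 0 ∨ i.1 = ℓ - 1 then k i else k i - 1)) :
    Nat.card {y : List Bool // y.length = n ∧ y.sublists.count x = 1} =
      (n - m + ρ true + ρ false - 1).choose (n - m) := by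
  obtain ⟨ℓ, rfl⟩ : ∃ ℓ', ℓ = ℓ' + 1 := ⟨ℓ - 1, by omega⟩
  obtain ⟨j, hj⟩ : ∃ j, k 0 = j + 1 := ⟨k 0 - 1, by have := hk 0; omega⟩
  have hhead : x = a 0 :: (replicate j (a 0) ++
      (ofFn fun i : Fin ℓ => replicate (k i.succ) (a i.succ)).flatten) := by
    rw [hx, ofFn_succ, flatten_cons, hj, replicate_succ, cons_append]
  have hlen : x.length = m := by
    simp only [hx, length_flatten, map_ofFn, Function.comp_def, length_replicate, sum_ofFn, hm]
  have hslots : slots (a 0) x = ρ true + ρ false := by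
    rw [hx, slots_flatten_ofFn_replicate ℓ a k (fun i => halt i.castSucc (by simp)) hk,
      if_pos rfl, add_assoc, ← sum_runWeights ℓ k hk, hρ, hρ,
      ← Finset.sum_filter_add_sum_filter_not _ (a · = true)]
    simp only [Bool.not_eq_true]
  calc Nat.card {y : List Bool // y.length = n ∧ y.sublists.count x = 1}
      = Nat.card {y : List Bool // y.length = x.length + (n - m) ∧
          IsSingletonAfter (a 0) x y} := by
        rw [hlen, Nat.add_sub_cancel' hmn, hhead]
        simp_rw [count_sublists_eq_one_iff]
    _ = (slots (a 0) x).multichoose (n - m) := card_isSingletonAfter _ _ _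
    _ = (n - m + ρ true + ρ false - 1).choose (n - m) := by
        rw [hslots, Nat.multichoose_eq, add_comm (ρ true + ρ false), ← add_assoc]
end

section
/- Let x ∈ {0,1}^m have run-length encoding (k_1, ..., k_ℓ) and let n = m + 1. Then the multiset of weights {ω_x(y) : y ∈ {0,1}^{m+1}, x a subsequence of y} consists of exactly ℓ strings with weights k_1 + 1, k_2 + 1, ..., k_ℓ + 1 respectively (one for each run extension), and exactly m − ℓ + 2 strings each of weight 1. -/
/-!
Every supersequence `y` of `x` with `|y| = |x| + 1` arises by inserting one letter `b` into `x`,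
and uniquely so if `b` is inserted at the start of its run in `y`. The number of ways of deleting a
letter of `y` to recover `x` is then the length of that run of `b`s, i.e. one more than the number
of `b`s that follow the insertion point in `x`. This exceeds `1` exactly when `b` is inserted in
front of a run of `x` with letter `b`, which yields the `ℓ` run extensions of weight `k i + 1`. All
other insertions have weight `1`, and over a binary alphabet there are `m + 2` insertions in all:
two at the front of `x` and one at each of the `m` later positions.
-/

variable {α : Type*}

namespace List

theorem exists_append_cons_of_sublist {x y : List α} (h : x <+ y)
    (hlen : y.length = x.length + 1) :
    ∃ u b v, u ++ v = x ∧ u.getLast? ≠ some b ∧ y = u ++ b :: v := by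
  induction h with
  | slnil => simp at hlen
  | @cons x y a h _ =>
    exact ⟨[], a, x, rfl, by simp, by rw [h.eq_of_length (by simp at hlen; omega)]; rfl⟩
  | @cons_cons x y a _ ih =>
    obtain ⟨u, b, v, rfl, hu, rfl⟩ := ih (by simpa using hlen)
    by_cases hab : u = [] ∧ a = b
    · obtain ⟨rfl, rfl⟩ := hab
      exact ⟨[], a, a :: v, rfl, by simp, rfl⟩
    · refine ⟨a :: u, b, v, rfl, ?_, rfl⟩
      rw [getLast?_cons]
      cases hlast : u.getLast? <;> simp_all

theorem getLast?_eq_of_append_cons_eq {u₁ v₁ u₂ v₂ : List α} {b₁ b₂ : α}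
    (hx : u₁ ++ v₁ = u₂ ++ v₂) (hy : u₁ ++ b₁ :: v₁ = u₂ ++ b₂ :: v₂)
    (hlt : u₁.length < u₂.length) : u₂.getLast? = some b₂ := by
  obtain ⟨_ | ⟨c, w⟩, rfl, hv₁⟩ | ⟨w, rfl, -⟩ := append_eq_append_iff.1 hy
  · simp at hlt
  · obtain ⟨rfl, rfl⟩ : c = b₁ ∧ w ++ b₂ :: v₂ = v₁ := by simpa [eq_comm] using hv₁
    have : w ++ [b₂] = c :: w :=
      append_cancel_right (by simpa using append_cancel_left (hx.trans (append_assoc ..)))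
    rw [← this, ← append_assoc, getLast?_concat]
  · simp at hlt

theorem exists_flatten_take_eq_of_getLast?_ne_head? {R : List (List α)}
    (hR : ∀ r ∈ R, ∀ c ∈ r, ∀ d ∈ r, c = d) {u v : List α} (huv : u ++ v = R.flatten)
    (hv : v ≠ []) (hseam : u.getLast? ≠ v.head?) :
    ∃ i < R.length, u = (R.take i).flatten ∧ v = (R.drop i).flatten := by
  induction R generalizing u with
  | nil => simp_all
  | cons r R ih =>
    by_cases hu : u = []
    · subst hu
      exact ⟨0, by simp, by simp, by simpa using huv⟩
    suffices ∀ w, u = r ++ w → R.flatten = w ++ v →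
        ∃ i < R.length + 1, u = ((r :: R).take i).flatten ∧ v = ((r :: R).drop i).flatten by
      rw [flatten_cons] at huv
      obtain ⟨_ | ⟨c, w⟩, hr, rfl⟩ | ⟨w, hu', hR'⟩ := append_eq_append_iff.1 huv
      · exact this [] (by simpa using hr.symm) (by simp)
      · refine absurd ?_ hseam
        rw [getLast?_eq_some_getLast hu, cons_append, head?_cons, hR r mem_cons_self (u.getLast hu)
          (hr ▸ mem_append_left _ (getLast_mem hu)) c (by simp [hr])]
      · exact this w hu' hR'
    intro w hw hRw
    have hw' : w.getLast? ≠ v.head? := by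
      rcases eq_or_ne w [] with rfl | hwne
      · simpa [eq_comm] using hv
      · simpa [hw, getLast?_append, getLast?_eq_some_getLast hwne] using hseam
    obtain ⟨i, hi, rfl, rfl⟩ := ih (fun r' hr' => hR r' (mem_cons_of_mem _ hr')) hRw.symm hw'
    exact ⟨i + 1, by omega, by simp [hw], by simp⟩

theorem takeWhile_beq_replicate_append [BEq α] [LawfulBEq α] {b : α} {w : List α} (n : ℕ)
    (hw : w.head? ≠ some b) : (replicate n b ++ w).takeWhile (· == b) = replicate n b := by
  rw [takeWhile_append_of_pos (by simp +contextual)]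
  cases w <;> simp_all

theorem length_flatten_take_lt_of_lt {R : List (List α)} (hR : ∀ r ∈ R, r ≠ []) {i j : ℕ}
    (hij : i < j) (hj : j ≤ R.length) :
    (R.take i).flatten.length < (R.take j).flatten.length := by
  induction R generalizing i j with
  | nil => simp at hj; omega
  | cons r R ih =>
    obtain _ | j := j
    · omega
    have hr := length_pos_iff.2 (hR r mem_cons_self)
    obtain _ | i := i
    · simp; omega
    · have := ih (fun r' hr' => hR r' (mem_cons_of_mem _ hr')) (i := i) (j := j) (by omega)
        (by simpa using hj)
      simpa using this

variable [DecidableEq α]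

theorem count_sublists_cons (b : α) (x y : List α) :
    (b :: y).sublists.count x = y.sublists.count x + y.sublists.countP (b :: · == x) := by
  rw [sublists_cons, bind_eq_flatMap, count_flatMap]
  induction y.sublists with
  | nil => simp
  | cons s S ih =>
    simp only [map_cons, sum_cons, ih, count_cons, countP_cons, Function.comp_apply, count_nil]
    omega

theorem count_sublists_cons_cons (a b : α) (x y : List α) :
    (b :: y).sublists.count (a :: x) =
      y.sublists.count (a :: x) + if a = b then y.sublists.count x else 0 := by
  rw [count_sublists_cons]
  split_ifs with h
  · subst h; simp [count_eq_countP]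
  · simp [Ne.symm h]

theorem count_sublists_of_length_le {x y : List α} (h : y.length ≤ x.length) :
    y.sublists.count x = if x = y then 1 else 0 := by
  induction y generalizing x with
  | nil => cases x <;> simp
  | cons b y ih =>
    obtain _ | ⟨a, x⟩ := x
    · simp at h
    · simp only [length_cons] at h
      rw [count_sublists_cons_cons, ih (by simp; omega), ih (by omega)]
      have : a :: x ≠ y := fun h' => by simp [← h'] at h
      by_cases hab : a = b <;> simp_all

theorem count_sublists_cons_self (b : α) (v : List α) :
    (b :: v).sublists.count v = (v.takeWhile (· == b)).length + 1 := by
  induction v with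
  | nil => simp
  | cons c v ih =>
    rw [count_sublists_cons_cons, count_sublists_of_length_le le_rfl]
    by_cases hcb : c = b
    · subst hcb; simp [ih]; omega
    · simp [hcb]

theorem count_sublists_append_cons_of_getLast?_ne {u v : List α} {b : α}
    (h : u.getLast? ≠ some b) :
    (u ++ b :: v).sublists.count (u ++ v) = (b :: v).sublists.count v := by
  induction u with
  | nil => rfl
  | cons c u ih =>
    have hne : c :: (u ++ v) ≠ u ++ b :: v := by
      intro heq
      have : c :: u = u ++ [b] := by
        simpa [take_append, take_of_length_le] using congrArg (take (u.length + 1)) heq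
      exact h (by rw [this, getLast?_concat])
    rw [cons_append, cons_append, count_sublists_cons_cons, if_pos rfl,
      count_sublists_of_length_le (by simp; omega), if_neg hne, zero_add,
      ih fun h' => h (by simp [getLast?_cons, h'])]

end List

open List

@[ext]
structure RunStartInsertion (x : List α) where
  pre : List α
  letter : α
  suf : List α
  pre_append_suf : pre ++ suf = x
  getLast?_pre_ne : pre.getLast? ≠ some letter

namespace RunStartInsertion

variable {x : List α}

def toList (p : RunStartInsertion x) : List α := p.pre ++ p.letter :: p.suf

theorem length_toList (p : RunStartInsertion x) : p.toList.length = x.length + 1 := by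
  obtain ⟨u, b, v, rfl, -⟩ := p
  simp [toList]
  omega

theorem toList_injective : Function.Injective (toList (x := x)) := by
  rintro ⟨u₁, b₁, v₁, rfl, h₁⟩ ⟨u₂, b₂, v₂, hx, h₂⟩ (hy : u₁ ++ b₁ :: v₁ = u₂ ++ b₂ :: v₂)
  rcases lt_trichotomy u₁.length u₂.length with hlt | heq | hgt
  · exact absurd (getLast?_eq_of_append_cons_eq hx.symm hy hlt) h₂
  · obtain ⟨rfl, hbv⟩ := append_inj hy heq
    obtain ⟨rfl, rfl⟩ := cons.inj hbv
    rfl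
  · exact absurd (getLast?_eq_of_append_cons_eq hx hy.symm hgt) h₁

theorem exists_toList_eq {y : List α} (h : x <+ y) (hlen : y.length = x.length + 1) :
    ∃ p : RunStartInsertion x, p.toList = y := by
  obtain ⟨u, b, v, huv, hu, rfl⟩ := exists_append_cons_of_sublist h hlen
  exact ⟨⟨u, b, v, huv, hu⟩, rfl⟩

def equivSigma (x : List α) :
    RunStartInsertion x ≃ Σ t : Fin (x.length + 1), {b : α // (x.take t).getLast? ≠ some b} where
  toFun p := ⟨⟨p.pre.length, by simp [← p.pre_append_suf]⟩, p.letter,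
    by simpa [← p.pre_append_suf] using p.getLast?_pre_ne⟩
  invFun q := ⟨x.take q.1, q.2, x.drop q.1, take_append_drop _ _, q.2.2⟩
  left_inv := by
    rintro ⟨u, b, v, rfl, -⟩
    ext <;> simp
  right_inv := by
    rintro ⟨t, b, -⟩
    ext <;> simp [t.is_le]

instance [Finite α] : Finite (RunStartInsertion x) := Finite.of_equiv _ (equivSigma x).symm

theorem card_eq [Fintype α] (x : List α) :
    Nat.card (RunStartInsertion x) = Fintype.card α + x.length * (Fintype.card α - 1) := by
  classical
  rw [Nat.card_congr (equivSigma x), Nat.card_sigma, Fin.sum_univ_succ]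
  simp [getLast?_take]

variable [DecidableEq α]

def weight (p : RunStartInsertion x) : ℕ := (p.suf.takeWhile (· == p.letter)).length + 1

theorem count_sublists_toList (p : RunStartInsertion x) :
    p.toList.sublists.count x = p.weight := by
  obtain ⟨u, b, v, rfl, hu⟩ := p
  rw [toList, count_sublists_append_cons_of_getLast?_ne hu, count_sublists_cons_self, weight]

theorem two_le_weight_iff (p : RunStartInsertion x) :
    2 ≤ p.weight ↔ p.suf.head? = some p.letter := by
  obtain ⟨u, b, _ | ⟨c, v⟩, -, -⟩ := p
  · simp [weight]
  · by_cases hc : c = b <;> simp [weight, hc]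

end RunStartInsertion

open RunStartInsertion

theorem card_count_sublists_eq_card_weight_eq [DecidableEq α] {w : ℕ} (hw : w ≠ 0) (x : List α) :
    Nat.card {y : List α // y.length = x.length + 1 ∧ y.sublists.count x = w} =
      Nat.card {p : RunStartInsertion x // p.weight = w} := by
  refine (Nat.card_eq_of_bijective (fun p => ⟨p.1.toList, p.1.length_toList,
    by rw [count_sublists_toList, p.2]⟩) ⟨?_, ?_⟩).symm
  · exact fun p q h => Subtype.ext (toList_injective (congrArg Subtype.val h))
  · rintro ⟨y, hlen, hcount⟩
    obtain ⟨p, rfl⟩ := exists_toList_eq (mem_sublists.1 (count_pos_iff.1 (by omega))) hlen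
    exact ⟨⟨p, by rw [← count_sublists_toList, hcount]⟩, rfl⟩

theorem card_weight_eq_one [DecidableEq α] [Finite α] (x : List α) :
    Nat.card {p : RunStartInsertion x // p.weight = 1} =
      Nat.card (RunStartInsertion x) - Nat.card {p : RunStartInsertion x // 2 ≤ p.weight} := by
  have : ∀ p : RunStartInsertion x, p.weight = 1 ↔ ¬ 2 ≤ p.weight := fun p => by
    simp only [weight]; omega
  simp_rw [this]
  rw [← Nat.card_congr (Equiv.sumCompl fun p : RunStartInsertion x => 2 ≤ p.weight), Nat.card_sum]
  omega


section Runs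

variable {ℓ : ℕ} (a : Fin ℓ → α) (k : Fin ℓ → ℕ)

def runBlocks : List (List α) := ofFn fun i => replicate (k i) (a i)

theorem flatten_drop_runBlocks (i : Fin ℓ) :
    ((runBlocks a k).drop i).flatten =
      replicate (k i) (a i) ++ ((runBlocks a k).drop (i + 1)).flatten := by
  rw [runBlocks, drop_eq_getElem_cons (by simp), List.getElem_ofFn, flatten_cons]

theorem flatten_take_succ_runBlocks (i : Fin ℓ) :
    ((runBlocks a k).take (i + 1)).flatten =
      ((runBlocks a k).take i).flatten ++ replicate (k i) (a i) := by
  simp [runBlocks, take_add_one]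

variable {a k} (halt : ∀ i : Fin ℓ, ∀ h : i.1 + 1 < ℓ, a i ≠ a ⟨i.1 + 1, h⟩) (hk : ∀ i, 0 < k i)
include halt hk

theorem getLast?_flatten_take_runBlocks_ne (i : Fin ℓ) :
    ((runBlocks a k).take i).flatten.getLast? ≠ some (a i) := by
  obtain ⟨_ | j, hj⟩ := i
  · simp
  · rw [flatten_take_succ_runBlocks a k ⟨j, by omega⟩, getLast?_append, getLast?_replicate,
      if_neg (hk _).ne']
    simpa using halt ⟨j, by omega⟩ hj

theorem head?_flatten_drop_succ_runBlocks_ne (i : Fin ℓ) :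
    ((runBlocks a k).drop (i + 1)).flatten.head? ≠ some (a i) := by
  by_cases h : i.1 + 1 < ℓ
  · rw [show i.1 + 1 = (⟨i.1 + 1, h⟩ : Fin ℓ).1 from rfl, flatten_drop_runBlocks,
      head?_append, head?_replicate, if_neg (hk _).ne']
    simpa using (halt i h).symm
  · rw [drop_eq_nil_of_le (by simp [runBlocks]; omega)]
    simp

def runExtension (i : Fin ℓ) : RunStartInsertion (runBlocks a k).flatten where
  pre := ((runBlocks a k).take i).flatten
  letter := a i
  suf := ((runBlocks a k).drop i).flatten
  pre_append_suf := by rw [← flatten_append, take_append_drop]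
  getLast?_pre_ne := getLast?_flatten_take_runBlocks_ne halt hk i

theorem runExtension_injective : Function.Injective (runExtension halt hk) := by
  have hblocks : ∀ r ∈ runBlocks a k, r ≠ [] := by
    simp [runBlocks, mem_ofFn, (hk _).ne']
  have hmono : StrictMono fun i => (runExtension halt hk i).pre.length := fun i j hij =>
    length_flatten_take_lt_of_lt hblocks hij (by simp [runBlocks])
  exact fun i j h => hmono.injective (congrArg (fun p => p.pre.length) h)

variable [DecidableEq α]

theorem weight_runExtension (i : Fin ℓ) : (runExtension halt hk i).weight = k i + 1 := by
  simp only [weight, runExtension, flatten_drop_runBlocks,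
    takeWhile_beq_replicate_append _ (head?_flatten_drop_succ_runBlocks_ne halt hk i),
    length_replicate]

theorem exists_runExtension_eq (p : RunStartInsertion (runBlocks a k).flatten)
    (hp : 2 ≤ p.weight) : ∃ i, runExtension halt hk i = p := by
  rw [two_le_weight_iff] at hp
  have hblocks : ∀ r ∈ runBlocks a k, ∀ c ∈ r, ∀ d ∈ r, c = d := by
    simp +contextual [runBlocks, mem_ofFn]
  obtain ⟨i, hi, hpre, hsuf⟩ := exists_flatten_take_eq_of_getLast?_ne_head? hblocks
    p.pre_append_suf (by rintro h; simp [h] at hp) (hp ▸ p.getLast?_pre_ne)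
  lift i to Fin ℓ using (by simpa [runBlocks] using hi)
  have hletter : p.letter = a i := by
    rw [hsuf, flatten_drop_runBlocks, head?_append, head?_replicate, if_neg (hk i).ne'] at hp
    simpa using hp.symm
  exact ⟨i, RunStartInsertion.ext hpre.symm hletter.symm hsuf.symm⟩

noncomputable def runExtensionEquiv :
    Fin ℓ ≃ {p : RunStartInsertion (runBlocks a k).flatten // 2 ≤ p.weight} :=
  Equiv.ofBijective
    (fun i => ⟨runExtension halt hk i, by rw [weight_runExtension]; have := hk i; omega⟩)
    ⟨fun _ _ h => runExtension_injective halt hk (congrArg Subtype.val h),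
      fun p => (exists_runExtension_eq halt hk p.1 p.2).imp fun _ h => Subtype.ext h⟩

theorem card_two_le_weight :
    Nat.card {p : RunStartInsertion (runBlocks a k).flatten // 2 ≤ p.weight} = ℓ := by
  rw [← Nat.card_congr (runExtensionEquiv halt hk), Nat.card_eq_fintype_card, Fintype.card_fin]

theorem card_weight_eq_of_two_le {w : ℕ} (hw : 2 ≤ w) :
    Nat.card {p : RunStartInsertion (runBlocks a k).flatten // p.weight = w} =
      Nat.card {i : Fin ℓ // k i + 1 = w} :=
  Nat.card_congr <| (Equiv.subtypeSubtypeEquivSubtype fun h => h ▸ hw).symm.trans <|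
    ((runExtensionEquiv halt hk).subtypeEquiv fun i => by
      rw [← weight_runExtension halt hk i]; rfl).symm

end Runs

/-- Clustering for single insertions: for `x` of length `m` with run-length encoding
`(k_1, …, k_ℓ)`, among the supersequences `y ∈ {0,1}^{m+1}` of `x` there are, for each
weight `w ≥ 2`, exactly as many supersequences of weight `w` as runs with `k_i + 1 = w`
(one per run extension), and exactly `m - ℓ + 2` supersequences of weight `1`. -/
theorem single_insertion_clustering (ℓ m : ℕ) (a : Fin ℓ → Bool) (k : Fin ℓ → ℕ)
    (halt : ∀ i : Fin ℓ, ∀ h : i.1 + 1 < ℓ, a i ≠ a ⟨i.1 + 1, h⟩)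
    (hk : ∀ i, 1 ≤ k i) (hm : ∑ i, k i = m)
    (x : List Bool) (hx : x = (List.ofFn fun i => List.replicate (k i) (a i)).flatten) :
    (∀ w : ℕ, 2 ≤ w →
      Nat.card {y : List Bool // y.length = m + 1 ∧ y.sublists.count x = w} =
        Nat.card {i : Fin ℓ // k i + 1 = w}) ∧
    Nat.card {y : List Bool // y.length = m + 1 ∧ y.sublists.count x = 1} =
      m - ℓ + 2 := by
  change x = (runBlocks a k).flatten at hx
  subst hx
  have hℓ : ℓ ≤ m := by
    simpa [← hm] using Finset.sum_le_sum fun i (_ : i ∈ Finset.univ) => hk i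
  obtain rfl : m = (runBlocks a k).flatten.length := by
    simp [runBlocks, sum_ofFn, Function.comp_def, ← hm]
  refine ⟨fun w hw => ?_, ?_⟩
  · rw [card_count_sublists_eq_card_weight_eq (by omega), card_weight_eq_of_two_le halt hk hw]
  · rw [card_count_sublists_eq_card_weight_eq one_ne_zero, card_weight_eq_one,
      card_two_le_weight halt hk, RunStartInsertion.card_eq, Fintype.card_bool]
    omega
end

section
/- For every n ≥ 2 and every binary string x of length m = n − 1, the Shannon entropy H_n(x) of the normalized weight distribution P_x satisfies H_n(x) ≥ H_n(0^m), with equality only if x ∈ {0^m, 1^m}. -/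
open scoped BigOperators

/-- The number of embeddings (masks) of `x` in `y`. -/
def wt (x y : List Bool) : ℕ := y.sublists.count x

/-- The Shannon entropy (base 2) of the normalized weight distribution `P_x` over
supersequences `y ∈ {0,1}^n` of `x`, with total weight `μ = C(n,m)·2^{n-m}`. -/
noncomputable def Hent (n : ℕ) (x : List Bool) : ℝ :=
  -∑ y : Fin n → Bool,
    ((wt x (List.ofFn y) : ℝ) / ((n.choose x.length * 2 ^ (n - x.length) : ℕ) : ℝ)) *
      Real.logb 2
        ((wt x (List.ofFn y) : ℝ) / ((n.choose x.length * 2 ^ (n - x.length) : ℕ) : ℝ))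

/-!
Write `w_y = wt x y`. Since the weights sum to `2n`, the entropy is
`log₂ (2n) - (∑_y w_y log w_y) / (2n log 2)`, so one has to maximise `S(x) = ∑_y w_y log w_y`.
Splitting `y` by its first letter, the weights for `b :: x` are those for `x`, except that the
weight of the string `b :: x` grows from `w = wt x (b :: x)` to `w + 1`, plus one new string of
weight one. Hence `S(b :: x) = S(x) + ((w + 1) log (w + 1) - w log w)`, and by strict convexity of
`t log t` the increment is largest exactly when `w` takes its maximal value `|x| + 1`, which
happens iff `x` is constant equal to `b`.
-/

open Finset Real

lemma wt_eq_count_sublists' (x y : List Bool) : wt x y = y.sublists'.count x :=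
  (List.sublists_perm_sublists' y).count_eq x

lemma wt_cons_cons (b a : Bool) (x y : List Bool) :
    wt (b :: x) (a :: y) = wt (b :: x) y + if a = b then wt x y else 0 := by
  simp only [wt_eq_count_sublists', List.sublists'_cons, List.count_append]
  congr 1
  split_ifs with h
  · subst h
    exact List.count_map_of_injective _ _ List.cons_injective x
  · simp [List.count_eq_zero, h]

lemma wt_eq_zero_of_length_lt {x y : List Bool} (h : y.length < x.length) : wt x y = 0 :=
  List.count_eq_zero.2 fun hx => (List.mem_sublists.1 hx).length_le.not_gt h

lemma wt_self (y : List Bool) : wt y y = 1 := by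
  induction y with
  | nil => rfl
  | cons a y ih => rw [wt_cons_cons, if_pos rfl, ih, wt_eq_zero_of_length_lt (by simp)]

lemma wt_of_length_eq {x y : List Bool} (h : x.length = y.length) :
    wt x y = if y = x then 1 else 0 := by
  split_ifs with hyx
  · exact hyx ▸ wt_self y
  · exact List.count_eq_zero.2 fun hx => hyx ((List.mem_sublists.1 hx).eq_of_length h).symm

lemma wt_cons_self_le (b : Bool) (x : List Bool) : wt x (b :: x) ≤ x.length + 1 := by
  induction x with
  | nil => cases b <;> rfl
  | cons c x ih =>
    rw [wt_cons_cons, wt_self, List.length_cons]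
    split_ifs with hbc
    · subst hbc; omega
    · omega

lemma wt_cons_self_eq_length_succ_iff (b : Bool) (x : List Bool) :
    wt x (b :: x) = x.length + 1 ↔ x = List.replicate x.length b := by
  induction x with
  | nil => cases b <;> simp [wt]
  | cons c x ih =>
    rw [wt_cons_cons, wt_self, List.length_cons, List.replicate_succ, List.cons.injEq]
    split_ifs with hbc
    · subst hbc
      rw [eq_self_iff_true, true_and, ← ih]
      omega
    · simp [Ne.symm hbc]

lemma sum_ofFn_succ {α M : Type*} [Fintype α] [AddCommMonoid M] (k : ℕ) (G : List α → M) :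
    ∑ y : Fin (k + 1) → α, G (List.ofFn y) = ∑ a : α, ∑ y : Fin k → α, G (a :: List.ofFn y) := by
  rw [← Fintype.sum_prod_type', ← (Fin.consEquiv fun _ => α).sum_comp]
  simp [Fin.consEquiv, List.ofFn_succ]

noncomputable def wtSum (Φ : ℕ → ℝ) (x : List Bool) : ℝ :=
  ∑ y : Fin (x.length + 1) → Bool, Φ (wt x (List.ofFn y))

lemma sum_wt_add (Φ : ℕ → ℝ) (z : List Bool) (h : List Bool → ℕ) :
    ∑ y : Fin z.length → Bool, Φ (wt z (List.ofFn y) + h (List.ofFn y))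
      = ∑ y : Fin z.length → Bool, Φ (h (List.ofFn y)) + (Φ (h z + 1) - Φ (h z)) := by
  rw [← sub_eq_iff_eq_add', ← sum_sub_distrib, sum_eq_single z.get]
  · rw [List.ofFn_get, wt_self, add_comm 1]
  · intro y _ hy
    have hyz : List.ofFn y ≠ z := fun h =>
      hy (List.ofFn_injective (h.trans (List.ofFn_get z).symm))
    rw [wt_of_length_eq (by simp), if_neg hyz, zero_add, sub_self]
  · simp

lemma wtSum_nil (Φ : ℕ → ℝ) : wtSum Φ [] = 2 * Φ 1 := by
  simp [wtSum, List.ofFn_succ, wt]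

lemma wtSum_cons (Φ : ℕ → ℝ) (hΦ0 : Φ 0 = 0) (b : Bool) (x : List Bool) :
    wtSum Φ (b :: x) = Φ 1 + (Φ (wt x (b :: x) + 1) - Φ (wt x (b :: x))) + wtSum Φ x := by
  have hsplit (a : Bool) : ∑ y : Fin (b :: x).length → Bool, Φ (wt (b :: x) (a :: List.ofFn y))
      = if a = b then wtSum Φ x + (Φ (wt x (b :: x) + 1) - Φ (wt x (b :: x))) else Φ 1 := by
    simp only [wt_cons_cons]
    split_ifs
    · exact sum_wt_add Φ (b :: x) (wt x)
    · simpa [hΦ0] using sum_wt_add Φ (b :: x) (fun _ => 0)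
  rw [wtSum, sum_ofFn_succ _ fun l => Φ (wt (b :: x) l), Fintype.sum_congr _ _ hsplit]
  cases b <;> simp <;> ring

section Comparison

variable {Φ : ℕ → ℝ}

lemma wtSum_replicate_succ (hΦ0 : Φ 0 = 0) (k : ℕ) (c : Bool) :
    wtSum Φ (List.replicate (k + 1) c)
      = Φ 1 + (Φ (k + 1 + 1) - Φ (k + 1)) + wtSum Φ (List.replicate k c) := by
  have hwt : wt (List.replicate k c) (c :: List.replicate k c) = k + 1 := by
    simpa using (wt_cons_self_eq_length_succ_iff c (List.replicate k c)).2 (by simp)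
  rw [List.replicate_succ, wtSum_cons Φ hΦ0, hwt]

lemma wtSum_le_wtSum_replicate (hΦ0 : Φ 0 = 0) (hΦ : Monotone fun k => Φ (k + 1) - Φ k)
    (x : List Bool) (c : Bool) : wtSum Φ x ≤ wtSum Φ (List.replicate x.length c) := by
  induction x with
  | nil => rfl
  | cons b x ih =>
    rw [wtSum_cons Φ hΦ0, List.length_cons, wtSum_replicate_succ hΦ0]
    have := hΦ (wt_cons_self_le b x)
    dsimp only at this
    linarith

lemma exists_eq_replicate_of_wtSum_eq (hΦ0 : Φ 0 = 0) (hΦ : StrictMono fun k => Φ (k + 1) - Φ k)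
    {x : List Bool} {c : Bool} (h : wtSum Φ x = wtSum Φ (List.replicate x.length c)) :
    ∃ b, x = List.replicate x.length b := by
  cases x with
  | nil => exact ⟨c, rfl⟩
  | cons b x =>
    refine ⟨b, ?_⟩
    rw [wtSum_cons Φ hΦ0, List.length_cons, wtSum_replicate_succ hΦ0] at h
    have hle := wtSum_le_wtSum_replicate hΦ0 hΦ.monotone x c
    have hgap : Φ (wt x (b :: x) + 1) - Φ (wt x (b :: x))
        = Φ (x.length + 1 + 1) - Φ (x.length + 1) :=
      le_antisymm (hΦ.monotone (wt_cons_self_le b x)) (by linarith)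
    have hx := (wt_cons_self_eq_length_succ_iff b x).1 (hΦ.injective hgap)
    rw [List.length_cons, List.replicate_succ, ← hx]

end Comparison

lemma wtSum_natCast (x : List Bool) : wtSum (fun k => (k : ℝ)) x = 2 * (x.length + 1) := by
  induction x with
  | nil => simp [wtSum_nil]
  | cons b x ih =>
    rw [wtSum_cons _ Nat.cast_zero, ih, List.length_cons]
    push_cast
    ring

lemma StrictConvexOn.strictMono_natCast_succ_sub {f : ℝ → ℝ}
    (hf : StrictConvexOn ℝ (Set.Ici 0) f) : StrictMono fun k : ℕ => f ↑(k + 1) - f k := by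
  refine strictMono_nat_of_lt_succ fun k => ?_
  have := hf.slope_strict_mono_adjacent (x := k) (y := k + 1) (z := k + 1 + 1)
    (by simp) (by simp; positivity) (lt_add_one _) (lt_add_one _)
  simpa using this

lemma neg_sum_div_mul_logb_div {ι : Type*} [Fintype ι] (w : ι → ℝ) {μ : ℝ}
    (hμ : ∑ i, w i = μ) (hμ0 : μ ≠ 0) :
    -∑ i, w i / μ * logb 2 (w i / μ) = logb 2 μ - (∑ i, w i * log (w i)) / (log 2 * μ) := by
  have hterm (t : ℝ) : t / μ * logb 2 (t / μ) = t * log t / (log 2 * μ) - t / μ * logb 2 μ := by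
    rcases eq_or_ne t 0 with rfl | ht
    · simp
    · rw [logb, logb, log_div ht hμ0]
      field_simp
  simp_rw [hterm, sum_sub_distrib, ← sum_mul, ← sum_div, hμ, div_self hμ0]
  ring

lemma Hent_length_succ (x : List Bool) :
    Hent (x.length + 1) x = logb 2 (2 * (x.length + 1))
      - wtSum (fun k => k * log k) x / (log 2 * (2 * (x.length + 1))) := by
  have hμ : (((x.length + 1).choose x.length * 2 ^ (x.length + 1 - x.length) : ℕ) : ℝ)
      = 2 * (x.length + 1) := by
    rw [Nat.choose_succ_self_right, Nat.add_sub_cancel_left]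
    push_cast
    ring
  rw [Hent, hμ]
  exact neg_sum_div_mul_logb_div _ (wtSum_natCast x) (by positivity)

/-- For a single deletion (`m = n - 1`), the constant string minimizes the entropy:
`H_n(x) ≥ H_n(0^m)`, with equality only if `x ∈ {0^m, 1^m}`. -/
theorem entropy_min_single_deletion (n m : ℕ) (hn : 2 ≤ n) (hm : m = n - 1)
    (x : List Bool) (hx : x.length = m) :
    Hent n (List.replicate m false) ≤ Hent n x ∧
      (Hent n x = Hent n (List.replicate m false) →
        x = List.replicate m false ∨ x = List.replicate m true) := by
  obtain rfl : n = m + 1 := by omega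
  subst hx
  set Φ : ℕ → ℝ := fun k => k * log k
  have hΦ : StrictMono fun k => Φ (k + 1) - Φ k :=
    strictConvexOn_mul_log.strictMono_natCast_succ_sub
  have hΦ0 : Φ 0 = 0 := by simp [Φ]
  have hle := wtSum_le_wtSum_replicate hΦ0 hΦ.monotone x false
  have hrep := Hent_length_succ (List.replicate x.length false)
  rw [List.length_replicate] at hrep
  rw [Hent_length_succ, hrep]
  refine ⟨by gcongr, fun h => ?_⟩
  obtain ⟨b, hb⟩ := exists_eq_replicate_of_wtSum_eq hΦ0 hΦ (c := false) (by
    have hD : log 2 * (2 * ((x.length : ℝ) + 1)) ≠ 0 := by positivity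
    rwa [sub_right_inj, div_left_inj' hD] at h)
  cases b
  · exact .inl hb
  · exact .inr hb
end

section
/- For positive integers ℓ' ≤ ℓ, the number of strictly increasing functions f : [ℓ'] → [ℓ] satisfying f(i) ≡ i (mod 2) for all i equals binomial(ℓ' + u, u), where u = ⌊(ℓ − ℓ')/2⌋ if ℓ ≡ ℓ' (mod 2) and u = ⌊(ℓ − 1 − ℓ')/2⌋ otherwise (i.e., u = (ℓ̃ − ℓ')/2 with ℓ̃ = ℓ if ℓ ≡ ℓ' mod 2 and ℓ̃ = ℓ − 1 otherwise). -/
/-- Gap lemma: a strictly monotone map between `Fin` types grows at least linearly. -/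
lemma strictMono_fin_gap {n m : ℕ} {g : Fin n → Fin m} (hg : StrictMono g) :
    ∀ (k : ℕ) (i j : Fin n), (j : ℕ) = (i : ℕ) + k → (g i : ℕ) + k ≤ g j := by
  intro k
  induction k with
  | zero =>
    intro i j hj
    have : i = j := Fin.ext (by omega)
    subst this; omega
  | succ k ih =>
    intro i j hj
    have hjlt : (i : ℕ) + k < n := by have := j.isLt; omega
    set j' : Fin n := ⟨(i : ℕ) + k, hjlt⟩ with hj'
    have h1 := ih i j' rfl
    have h2 : g j' < g j := hg (by simp [Fin.lt_def, hj']; omega)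
    have := Fin.lt_def.mp h2
    omega

/-- The number of strictly monotone maps `Fin m → Fin n` is `n.choose m`. -/
lemma card_strictMono_fin (m n : ℕ) :
    Nat.card {f : Fin m → Fin n // StrictMono f} = n.choose m := by
  have e : {f : Fin m → Fin n // StrictMono f} ≃ {s : Finset (Fin n) // s.card = m} :=
    { toFun := fun f => ⟨Finset.univ.image f.1, by
        rw [Finset.card_image_of_injective _ f.2.injective, Finset.card_univ,
          Fintype.card_fin]⟩
      invFun := fun s => ⟨s.1.orderEmbOfFin s.2, (s.1.orderEmbOfFin s.2).strictMono⟩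
      left_inv := fun f => by
        refine Subtype.ext ?_
        exact (Finset.orderEmbOfFin_unique _
          (fun i => Finset.mem_image_of_mem _ (Finset.mem_univ i)) f.2).symm
      right_inv := fun s => by
        refine Subtype.ext ?_
        apply Finset.coe_injective
        rw [Finset.coe_image, Finset.coe_univ, Set.image_univ]
        exact Finset.range_orderEmbOfFin s.1 s.2 }
  rw [Nat.card_congr e, Nat.card_eq_fintype_card, Fintype.card_finset_len,
    Fintype.card_fin]

/-- The number of strictly increasing parity-preserving maps `f : [ℓ'] → [ℓ]`
(`f(i) ≡ i (mod 2)`) equals `C(ℓ' + u, u)` with `u = (ℓ̃ - ℓ')/2`, where `ℓ̃ = ℓ` if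
`ℓ ≡ ℓ' (mod 2)` and `ℓ̃ = ℓ - 1` otherwise. -/
theorem parity_increasing_maps_count (ℓ' ℓ : ℕ) (h1 : 1 ≤ ℓ') (h2 : ℓ' ≤ ℓ) :
    Nat.card {f : Fin ℓ' → Fin ℓ //
        StrictMono f ∧ ∀ i : Fin ℓ', (f i : ℕ) % 2 = (i : ℕ) % 2} =
      (ℓ' + ((if ℓ % 2 = ℓ' % 2 then ℓ else ℓ - 1) - ℓ') / 2).choose
        (((if ℓ % 2 = ℓ' % 2 then ℓ else ℓ - 1) - ℓ') / 2) := by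
  set ℓt : ℕ := if ℓ % 2 = ℓ' % 2 then ℓ else ℓ - 1 with hℓt
  set u : ℕ := (ℓt - ℓ') / 2 with hu
  have hfacts : ℓt % 2 = ℓ' % 2 ∧ ℓ' ≤ ℓt ∧ ℓt ≤ ℓ := by
    rw [hℓt]; split <;> omega
  obtain ⟨hpar, hle1, hle2⟩ := hfacts
  have h2u : ℓ' + 2 * u = ℓt := by omega
  have hlast : ℓ' - 1 < ℓ' := by omega
  -- a bound on parity-preserving strictly monotone maps
  have key : ∀ (f : Fin ℓ' → Fin ℓ), StrictMono f →
      (∀ i : Fin ℓ', (f i : ℕ) % 2 = (i : ℕ) % 2) →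
      ∀ i : Fin ℓ', (i : ℕ) ≤ (f i : ℕ) ∧ (f i : ℕ) ≤ 2 * u + i := by
    intro f hf hp i
    have hzero : (f ⟨0, by omega⟩ : ℕ) + (i : ℕ) ≤ f i :=
      strictMono_fin_gap hf i ⟨0, by omega⟩ i (by simp)
    have hlastb : (f i : ℕ) + ((ℓ' - 1) - (i : ℕ)) ≤ f ⟨ℓ' - 1, hlast⟩ :=
      strictMono_fin_gap hf ((ℓ' - 1) - (i : ℕ)) i ⟨ℓ' - 1, hlast⟩
        (by simp; omega)
    have hbound : (f ⟨ℓ' - 1, hlast⟩ : ℕ) < ℓ := (f _).isLt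
    have hpi := hp i
    have hi := i.isLt
    constructor
    · omega
    · -- f i - i is even and f i ≤ ℓ - ℓ' + i; conclude f i ≤ ℓt - ℓ' + i = 2u + i
      rw [hℓt] at h2u
      split at h2u <;> omega
  -- bijection with strictly monotone maps into Fin (ℓ' + u)
  have hcard : Nat.card {f : Fin ℓ' → Fin ℓ //
      StrictMono f ∧ ∀ i : Fin ℓ', (f i : ℕ) % 2 = (i : ℕ) % 2} =
      Nat.card {h : Fin ℓ' → Fin (ℓ' + u) // StrictMono h} := by
    apply Nat.card_eq_of_bijective
      (fun f => ⟨fun i => ⟨((f.1 i : ℕ) + i) / 2, by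
        have := (key f.1 f.2.1 f.2.2 i).2
        have hi := i.isLt
        omega⟩, by
        intro i j hij
        have hij' := Fin.lt_def.mp hij
        have h1 : (f.1 i : ℕ) + 1 ≤ f.1 j := Fin.lt_def.mp (f.2.1 hij)
        have hpi := f.2.2 i
        have hpj := f.2.2 j
        rw [Fin.lt_def]
        simp only
        omega⟩)
    constructor
    · -- injective
      intro f g hfg
      have : ∀ i : Fin ℓ', f.1 i = g.1 i := by
        intro i
        have h := congrFun (congrArg Subtype.val hfg) i
        have h' := congrArg Fin.val h
        simp only [Fin.val_mk] at h'
        have hpf := f.2.2 i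
        have hpg := g.2.2 i
        refine Fin.ext ?_
        clear h hfg
        omega
      exact Subtype.ext (funext this)
    · -- surjective
      intro h
      have hkey : ∀ i : Fin ℓ', (i : ℕ) ≤ (h.1 i : ℕ) ∧ (h.1 i : ℕ) ≤ u + i := by
        intro i
        have hzero : (h.1 ⟨0, by omega⟩ : ℕ) + (i : ℕ) ≤ h.1 i :=
          strictMono_fin_gap h.2 i ⟨0, by omega⟩ i (by simp)
        have hlastb : (h.1 i : ℕ) + ((ℓ' - 1) - (i : ℕ)) ≤ h.1 ⟨ℓ' - 1, hlast⟩ :=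
          strictMono_fin_gap h.2 ((ℓ' - 1) - (i : ℕ)) i ⟨ℓ' - 1, hlast⟩
            (by simp; omega)
        have hbound : (h.1 ⟨ℓ' - 1, hlast⟩ : ℕ) < ℓ' + u := (h.1 _).isLt
        have hi := i.isLt
        omega
      refine ⟨⟨fun i => ⟨2 * (h.1 i : ℕ) - i, by
          have := (hkey i).2
          have hi := i.isLt
          omega⟩, ?_, ?_⟩, ?_⟩
      · intro i j hij
        have hij' := Fin.lt_def.mp hij
        have hgap : (h.1 i : ℕ) + ((j : ℕ) - i) ≤ h.1 j :=
          strictMono_fin_gap h.2 ((j : ℕ) - (i : ℕ)) i j (by omega)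
        have h1 := (hkey i).1
        rw [Fin.lt_def]
        simp only
        omega
      · intro i
        have h1 := (hkey i).1
        simp only
        omega
      · refine Subtype.ext (funext fun i => Fin.ext ?_)
        have h1 := (hkey i).1
        simp only
        omega
  rw [hcard, card_strictMono_fin]
  rw [← Nat.choose_symm (Nat.le_add_right ℓ' u), Nat.add_sub_cancel_left]
end

section
/- Let x ∈ {0,1}^m have run-length encoding (k_1, ..., k_ℓ) with ℓ ≥ 2, and let g(x) be the string with run-length encoding (k_1 + k_2, k_3, ..., k_ℓ). Then for n = m + 1, H_n(x) − H_n(g(x)) = [(k_1+1)log(1/(k_1+1)) + (k_2+1)log(1/(k_2+1)) − (k_1+k_2+1)log(1/(k_1+k_2+1))] / μ, up to the common normalization μ = 2n, and this difference is strictly positive. -/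
open scoped BigOperators

/-
For `n = m + 1` the supersequences `y` of `x`, counted with multiplicity `ω_x(y)`, are exactly the
`2(m+1)` one-symbol insertions into `x`. Hence `H_{m+1}(x) = log(2(m+1)) - S(x)/(2(m+1))`, where
`S(x)` sums `log ω_x(y)` over all insertions `y`. Prepending a symbol `a` changes `S` only
through the string `a·a·x`: with `r = ω_x(a·x)`, it occurs `r + 1` times with weight `r + 1` among
the insertions into `a·x`, against `r` times with weight `r` among those into `x`, so
`S(a·x) = S(x) + φ(r+1) - φ(r)` with `φ(t) = t log t`. A leading run of length `k` thus contributes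
`φ(k+1)`, merging the first two runs changes `S` by `φ(k₁+k₂+1) - φ(k₁+1) - φ(k₂+1)`, and this is
positive by strict convexity of `φ`.
-/

open List in
lemma sum_count_ofFn_smul {α M : Type*} [Fintype α] [DecidableEq α] [AddCommMonoid M] {n : ℕ}
    (L : List (List α)) (hL : ∀ y ∈ L, y.length = n) (F : List α → M) :
    ∑ y : Fin n → α, L.count (ofFn y) • F (ofFn y) = (L.map F).sum := by
  induction L with
  | nil => simp
  | cons a L ih =>
    obtain rfl := hL a mem_cons_self
    simp only [count_cons, add_smul, Finset.sum_add_distrib, map_cons, sum_cons,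
      ih fun y hy => hL y (mem_cons_of_mem a hy), beq_iff_eq, ite_smul, one_smul, zero_smul]
    rw [add_comm, Fintype.sum_eq_single a.get, if_pos (ofFn_get a).symm, ofFn_get]
    intro y hy
    rw [if_neg]
    intro ha
    exact hy (ofFn_injective (by rw [ofFn_get]; exact ha.symm))

lemma StrictConvexOn.add_lt_add_of_add_eq {D : Set ℝ} {f : ℝ → ℝ} (hf : StrictConvexOn ℝ D f)
    {a b p q : ℝ} (ha : a ∈ D) (hb : b ∈ D) (hap : a < p) (hpb : p < b) (hpq : p + q = a + b) :
    f p + f q < f a + f b := by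
  have hab : 0 < b - a := by linarith
  have hsum : (b - p) / (b - a) + (p - a) / (b - a) = 1 := by field_simp; ring
  have hp : ((b - p) / (b - a)) • a + ((p - a) / (b - a)) • b = p := by
    simp only [smul_eq_mul]; field_simp; ring
  have hq : ((p - a) / (b - a)) • a + ((b - p) / (b - a)) • b = q := by
    rw [show q = a + b - p by linarith, smul_eq_mul, smul_eq_mul]; field_simp; ring
  have h₁ := hf.2 ha hb (by linarith : a ≠ b) (by positivity) (by positivity) hsum
  have h₂ := hf.2 ha hb (by linarith : a ≠ b) (by positivity) (by positivity)
    ((add_comm _ _).trans hsum)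
  rw [hp] at h₁
  rw [hq] at h₂
  calc f p + f q < ((b - p) / (b - a)) • f a + ((p - a) / (b - a)) • f b +
        (((p - a) / (b - a)) • f a + ((b - p) / (b - a)) • f b) := add_lt_add h₁ h₂
    _ = f a + f b := by simp only [smul_eq_mul]; field_simp; ring

lemma Real.add_one_mul_logb_add_lt {s t : ℝ} (hs : 0 < s) (ht : 0 < t) :
    (s + 1) * Real.logb 2 (s + 1) + (t + 1) * Real.logb 2 (t + 1) <
      (s + t + 1) * Real.logb 2 (s + t + 1) := by
  have h := Real.strictConvexOn_mul_log.add_lt_add_of_add_eq (a := 1) (b := s + t + 1)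
    (by norm_num) (by simp; positivity) (by linarith) (by linarith) (by ring : s + 1 + (t + 1) = _)
  simp only [Real.log_one, mul_zero, zero_add] at h
  simp only [Real.logb, ← mul_div_assoc, ← add_div]
  exact div_lt_div_of_pos_right h (Real.log_pos one_lt_two)

namespace SupersequenceEntropy

open List

lemma wt_eq_count_sublists' (x y : List Bool) : wt x y = y.sublists'.count x := by
  unfold wt
  rw [count_eq_countP, count_eq_countP]
  exact y.sublists_perm_sublists'.countP_eq _

lemma wt_cons_cons (d c : Bool) (x y : List Bool) :
    wt (d :: x) (c :: y) = wt (d :: x) y + if d = c then wt x y else 0 := by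
  rw [wt_eq_count_sublists', wt_eq_count_sublists', sublists'_cons, count_append,
    ← wt_eq_count_sublists']
  split_ifs with h
  · subst h
    rw [count_map_of_injective _ _ cons_injective, wt_eq_count_sublists' x y]
  · rw [count_eq_zero.2]
    simp [Ne.symm h]

lemma wt_eq_zero_of_length_lt {x y : List Bool} (h : y.length < x.length) : wt x y = 0 := by
  rw [wt, count_eq_zero]
  exact fun hmem => absurd (mem_sublists.1 hmem).length_le (by omega)

lemma wt_of_length_eq {x y : List Bool} (h : x.length = y.length) :
    wt x y = if x = y then 1 else 0 := by
  induction y generalizing x with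
  | nil => rw [length_eq_zero_iff.1 h]; rfl
  | cons c y ih =>
    obtain _ | ⟨d, x⟩ := x
    · simp at h
    · rw [wt_cons_cons, wt_eq_zero_of_length_lt (by simp at h ⊢; omega), ih (by simpa using h)]
      by_cases hdc : d = c <;> simp [hdc]

lemma wt_self (x : List Bool) : wt x x = 1 := by
  simp [wt_of_length_eq]

lemma wt_cons_self {z : List Bool} {a : Bool} (hz : z.head? ≠ some a) : wt z (a :: z) = 1 := by
  obtain _ | ⟨c, z⟩ := z
  · cases a <;> rfl
  · rw [wt_cons_cons, wt_self, if_neg (by simpa [eq_comm] using hz)]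

lemma wt_replicate_append_cons {z : List Bool} {a : Bool} (hz : z.head? ≠ some a) (k : ℕ) :
    wt (replicate k a ++ z) (a :: (replicate k a ++ z)) = k + 1 := by
  induction k with
  | zero => exact wt_cons_self hz
  | succ k ih =>
    rw [replicate_succ, cons_append, wt_cons_cons, if_pos rfl, wt_self, ih]
    omega

def insertions : List Bool → List (List Bool)
  | [] => [[false], [true]]
  | c :: x => [false :: c :: x, true :: c :: x] ++ (insertions x).map (c :: ·)

lemma length_of_mem_insertions {x y : List Bool} (hy : y ∈ insertions x) :
    y.length = x.length + 1 := by
  induction x generalizing y with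
  | nil =>
    simp only [insertions, mem_cons, not_mem_nil, or_false] at hy
    rcases hy with rfl | rfl <;> rfl
  | cons c x ih =>
    simp only [insertions, mem_append, mem_map, mem_cons, mem_nil_iff, or_false] at hy
    obtain (rfl | rfl) | ⟨y, hy, rfl⟩ := hy
    · rfl
    · rfl
    · simp [ih hy]

lemma length_insertions (x : List Bool) : (insertions x).length = 2 * (x.length + 1) := by
  induction x with
  | nil => rfl
  | cons c x ih =>
    simp only [insertions, cons_append, nil_append, length_cons, length_map, ih]
    ring

lemma wt_eq_count_insertions {x y : List Bool} (h : y.length = x.length + 1) :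
    wt x y = (insertions x).count y := by
  induction x generalizing y with
  | nil =>
    obtain ⟨c, rfl⟩ := length_eq_one_iff.1 h
    cases c <;> rfl
  | cons d x ih =>
    obtain _ | ⟨c, y⟩ := y
    · simp at h
    have hy : y.length = x.length + 1 := by simpa using h
    rw [wt_cons_cons, wt_of_length_eq (by simpa using hy.symm), ih hy, insertions, count_append]
    congr 1
    · rw [count_cons, count_cons, count_nil]
      cases c <;> simp
    · split_ifs with hdc
      · rw [hdc, count_map_of_injective _ _ cons_injective]
      · exact (count_eq_zero.2 (by simp [hdc])).symm

lemma sum_wt_mul (x : List Bool) (F : List Bool → ℝ) :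
    ∑ y : Fin (x.length + 1) → Bool, (wt x (ofFn y) : ℝ) * F (ofFn y) =
      ((insertions x).map F).sum := by
  rw [← sum_count_ofFn_smul _ (fun _ => length_of_mem_insertions)]
  simp [wt_eq_count_insertions]

noncomputable def logWeightSum (x : List Bool) : ℝ :=
  ((insertions x).map fun y => Real.logb 2 (wt x y)).sum

lemma Hent_eq_logb_sub {x : List Bool} {m : ℕ} (hx : x.length = m) :
    Hent (m + 1) x = Real.logb 2 (2 * (m + 1)) - logWeightSum x / (2 * (m + 1)) := by
  subst hx
  set μ : ℝ := 2 * (x.length + 1)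
  have hμ : 0 < μ := by positivity
  have hN : (((x.length + 1).choose x.length * 2 ^ (x.length + 1 - x.length) : ℕ) : ℝ) = μ := by
    simp only [Nat.choose_succ_self_right, add_tsub_cancel_left, pow_one, Nat.cast_mul,
      Nat.cast_add, Nat.cast_one, Nat.cast_ofNat, μ]
    ring
  have hterm (w : ℝ) :
      w / μ * Real.logb 2 (w / μ) = w * Real.logb 2 w / μ - w * 1 * (Real.logb 2 μ / μ) := by
    rcases eq_or_ne w 0 with rfl | hw
    · simp
    · rw [Real.logb_div hw hμ.ne']; ring
  unfold Hent
  simp only [hN, hterm]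
  rw [Finset.sum_sub_distrib, ← Finset.sum_div, ← Finset.sum_mul,
    sum_wt_mul x (fun y => Real.logb 2 (wt x y)), sum_wt_mul x (fun _ => 1)]
  simp only [map_const', length_insertions, sum_replicate, nsmul_eq_mul, Nat.cast_mul,
    Nat.cast_ofNat, Nat.cast_add, Nat.cast_one, mul_one, logWeightSum, μ]
  field_simp
  ring

lemma logWeightSum_cons (a : Bool) (x : List Bool) :
    logWeightSum (a :: x) = logWeightSum x +
      ((wt x (a :: x) + 1 : ℝ) * Real.logb 2 (wt x (a :: x) + 1) -
        (wt x (a :: x) : ℝ) * Real.logb 2 (wt x (a :: x))) := by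
  -- `sum_map_ite_eq` counts with the `BEq` instance derived from `DecidableEq`
  have hr : @count _ instBEqOfDecidableEq (a :: x) (insertions x) = wt x (a :: x) := by
    rw [wt_eq_count_insertions (x := x) (y := a :: x) rfl]
    congr
    exact lawful_beq_subsingleton _ _
  set r := wt x (a :: x)
  have htail : ∀ y ∈ insertions x, Real.logb 2 (wt (a :: x) (a :: y)) =
      if y = a :: x then Real.logb 2 (r + 1) else Real.logb 2 (wt x y) := by
    intro y hy
    rw [wt_cons_cons, if_pos rfl,
      wt_of_length_eq (by simp [length_of_mem_insertions hy])]
    split_ifs with h₁ h₂ h₂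
    · subst h₂; push_cast; rw [add_comm]
    · exact absurd h₁.symm h₂
    · exact absurd h₂.symm h₁
    · simp
  unfold logWeightSum
  rw [insertions, map_append, sum_append, map_map, Function.comp_def, map_congr_left htail,
    sum_map_ite_eq, hr]
  cases a <;>
    simp only [map_cons, wt_cons_cons, wt_self, Bool.true_eq_false, Bool.false_eq_true, ↓reduceIte,
      add_zero, zero_add, Nat.cast_add, Nat.cast_one, add_comm (1 : ℝ), Real.logb_one, map_nil,
      sum_cons, sum_nil, nsmul_eq_mul, r] <;>
    ring

lemma logWeightSum_replicate_append {z : List Bool} {a : Bool} (hz : z.head? ≠ some a) (k : ℕ) :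
    logWeightSum (replicate k a ++ z) = logWeightSum z + (k + 1 : ℝ) * Real.logb 2 (k + 1) := by
  induction k with
  | zero => simp
  | succ k ih =>
    rw [replicate_succ, cons_append, logWeightSum_cons, wt_replicate_append_cons hz, ih]
    push_cast
    ring

lemma Hent_sub_Hent_merge {a b : Bool} (hab : a ≠ b) {i j m : ℕ} (hj : 1 ≤ j) {z : List Bool}
    (hz : z.head? ≠ some b) (hm : i + j + z.length = m) :
    Hent (m + 1) (replicate i a ++ (replicate j b ++ z)) - Hent (m + 1) (replicate (i + j) b ++ z) =
      (((i : ℝ) + (j : ℝ) + 1) * Real.logb 2 ((i : ℝ) + (j : ℝ) + 1) -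
        ((i : ℝ) + 1) * Real.logb 2 ((i : ℝ) + 1) - ((j : ℝ) + 1) * Real.logb 2 ((j : ℝ) + 1)) /
        (2 * (m + 1)) := by
  have hjz : (replicate j b ++ z).head? ≠ some a := by
    obtain ⟨j, rfl⟩ := Nat.exists_eq_add_of_le' hj
    simpa [replicate_succ] using hab.symm
  rw [Hent_eq_logb_sub (by simp; omega), Hent_eq_logb_sub (by simp; omega),
    logWeightSum_replicate_append hjz, logWeightSum_replicate_append hz,
    logWeightSum_replicate_append hz]
  push_cast
  ring

end SupersequenceEntropy

open SupersequenceEntropy List in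
/-- Single-deletion entropy drop under the run-merging operation `g`: if `x` has
run-length encoding `(k_1, …, k_ℓ)` with `ℓ ≥ 2` and `g(x)` has run-length encoding
`(k_1 + k_2, k_3, …, k_ℓ)`, then for `n = m + 1`,
`H_n(x) - H_n(g(x)) = [(k₁+k₂+1)log(k₁+k₂+1) - (k₁+1)log(k₁+1) - (k₂+1)log(k₂+1)]/(2n)`,
and this difference is strictly positive. -/
theorem entropy_drop_merge (ℓ : ℕ) (hl : 2 ≤ ℓ) (a : Fin ℓ → Bool) (k : Fin ℓ → ℕ)
    (halt : ∀ i : Fin ℓ, ∀ h : i.1 + 1 < ℓ, a i ≠ a ⟨i.1 + 1, h⟩)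
    (hk : ∀ i, 1 ≤ k i) (m : ℕ) (hm : ∑ i, k i = m)
    (x gx : List Bool)
    (hx : x = (List.ofFn fun i => List.replicate (k i) (a i)).flatten)
    (hgx : gx = (List.ofFn fun j : Fin (ℓ - 1) =>
        List.replicate
          (if j.1 = 0 then k ⟨0, by omega⟩ + k ⟨1, by omega⟩
           else k ⟨j.1 + 1, by have := j.isLt; omega⟩)
          (a ⟨j.1 + 1, by have := j.isLt; omega⟩)).flatten) :
    Hent (m + 1) x - Hent (m + 1) gx =
      (((k ⟨0, by omega⟩ : ℝ) + (k ⟨1, by omega⟩ : ℝ) + 1) *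
          Real.logb 2 ((k ⟨0, by omega⟩ : ℝ) + (k ⟨1, by omega⟩ : ℝ) + 1) -
        ((k ⟨0, by omega⟩ : ℝ) + 1) * Real.logb 2 ((k ⟨0, by omega⟩ : ℝ) + 1) -
        ((k ⟨1, by omega⟩ : ℝ) + 1) * Real.logb 2 ((k ⟨1, by omega⟩ : ℝ) + 1)) /
        (2 * (m + 1)) ∧
    0 < Hent (m + 1) x - Hent (m + 1) gx := by
  obtain ⟨l, rfl⟩ : ∃ l, ℓ = l + 2 := ⟨ℓ - 2, by omega⟩
  simp only [Fin.zero_eta, Fin.mk_one] at hgx ⊢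
  set rest := (ofFn fun i : Fin l => replicate (k i.succ.succ) (a i.succ.succ)).flatten
  have hx' : x = replicate (k 0) (a 0) ++ (replicate (k 1) (a 1) ++ rest) := by
    simp [hx, ofFn_succ, rest]
  have hgx' : gx = replicate (k 0 + k 1) (a 1) ++ rest := by
    simp only [hgx, Nat.add_one_sub_one, Fin.val_eq_zero_iff, ofFn_succ, ↓reduceIte,
      Fin.succ_ne_zero, Fin.val_succ, flatten_cons, rest]
    rfl
  have hhead : rest.head? ≠ some (a 1) := by
    cases l with
    | zero => simp [rest]
    | succ l =>
      obtain ⟨j, hj⟩ : ∃ j, k 2 = j + 1 := ⟨k 2 - 1, by have := hk 2; omega⟩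
      have h12 : a 1 ≠ a 2 := halt 1 (by simp)
      simpa [rest, ofFn_succ, hj, replicate_succ] using h12.symm
  have hlen : k 0 + k 1 + rest.length = m := by
    simp [← hm, rest, sum_ofFn, Fin.sum_univ_succ, add_assoc]
  have h01 : a 0 ≠ a 1 := halt 0 (by simp)
  have hdiff := Hent_sub_Hent_merge h01 (hk 1) hhead hlen
  rw [← hx', ← hgx'] at hdiff
  refine ⟨hdiff, hdiff ▸ div_pos ?_ (by positivity)⟩
  linarith [Real.add_one_mul_logb_add_lt (s := k 0) (t := k 1)
    (by exact_mod_cast hk 0) (by exact_mod_cast hk 1)]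
end

section
/- For any n ≥ m ≥ 1 and any x ∈ {0,1}^m, the identity Σ_{ℓ=m}^{n} binomial(ℓ−1, m−1)·2^{n−ℓ} = Σ_{r=m}^{n} binomial(n, r) holds; i.e., counting supersequences of x by the endpoint ℓ of the canonical embedding recovers the Levenshtein count |Υ_{n,x}|. -/
lemma canonical_endpoint_count_aux (k : ℕ) :
    ∀ n, k + 1 ≤ n →
      ∑ ℓ ∈ Finset.Icc (k + 1) n, (ℓ - 1).choose k * 2 ^ (n - ℓ) =
        ∑ r ∈ Finset.Icc (k + 1) n, n.choose r := by
  intro n hn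
  induction n, hn using Nat.le_induction with
  | base => simp
  | succ n hn ih =>
    rw [Finset.sum_Icc_succ_top (by omega : k + 1 ≤ n + 1),
        Finset.sum_Icc_succ_top (by omega : k + 1 ≤ n + 1)]
    have h1 : ∑ ℓ ∈ Finset.Icc (k + 1) n, (ℓ - 1).choose k * 2 ^ (n + 1 - ℓ)
        = 2 * ∑ ℓ ∈ Finset.Icc (k + 1) n, (ℓ - 1).choose k * 2 ^ (n - ℓ) := by
      rw [Finset.mul_sum]
      refine Finset.sum_congr rfl fun ℓ hℓ => ?_
      simp only [Finset.mem_Icc] at hℓ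
      have h : n + 1 - ℓ = (n - ℓ) + 1 := by omega
      rw [h, pow_succ]; ring
    have h2 : ∀ r ∈ Finset.Icc (k + 1) n, (n + 1).choose r = n.choose (r - 1) + n.choose r := by
      intro r hr
      simp only [Finset.mem_Icc] at hr
      obtain ⟨s, rfl⟩ : ∃ s, r = s + 1 := ⟨r - 1, by omega⟩
      simp [Nat.choose_succ_succ, Nat.add_comm]
    rw [h1, ih, Finset.sum_congr rfl h2, Finset.sum_add_distrib]
    have h3 : ∑ r ∈ Finset.Icc (k + 1) n, n.choose (r - 1)
        = ∑ s ∈ Finset.Icc k (n - 1), n.choose s := by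
      apply Finset.sum_nbij' (fun r => r - 1) (fun s => s + 1) <;>
        intros <;> simp_all [Finset.mem_Icc] <;> omega
    have h4 : ∑ s ∈ Finset.Icc k (n - 1), n.choose s + n.choose n
        = ∑ s ∈ Finset.Icc k n, n.choose s := by
      have hn' : n = (n - 1) + 1 := by omega
      calc ∑ s ∈ Finset.Icc k (n - 1), n.choose s + n.choose n
          = ∑ s ∈ Finset.Icc k ((n - 1) + 1), n.choose s := by
            rw [Finset.sum_Icc_succ_top (by omega : k ≤ (n - 1) + 1), ← hn']
        _ = ∑ s ∈ Finset.Icc k n, n.choose s := by rw [← hn']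
    have h5 : ∑ s ∈ Finset.Icc k n, n.choose s
        = n.choose k + ∑ s ∈ Finset.Icc (k + 1) n, n.choose s := by
      conv_rhs => rw [Finset.Icc_add_one_left_eq_Ioc]
      rw [Finset.Icc_eq_cons_Ioc (by omega : k ≤ n), Finset.sum_cons]
    simp only [Nat.choose_self, Nat.add_sub_cancel, Nat.sub_self, pow_zero, mul_one] at *
    omega

/-- Counting the supersequences of `x` by the endpoint `ℓ` of the canonical embedding
recovers the Levenshtein count: `Σ_{ℓ=m}^{n} C(ℓ-1, m-1)·2^{n-ℓ} = Σ_{r=m}^{n} C(n, r)`. -/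
theorem canonical_endpoint_count (m n : ℕ) (hm : 1 ≤ m) (hmn : m ≤ n)
    (x : List Bool) (hx : x.length = m) :
    ∑ ℓ ∈ Finset.Icc m n, (ℓ - 1).choose (m - 1) * 2 ^ (n - ℓ) =
      ∑ r ∈ Finset.Icc m n, n.choose r := by
  obtain ⟨k, rfl⟩ : ∃ k, m = k + 1 := ⟨m - 1, by omega⟩
  simpa using canonical_endpoint_count_aux k n hmn
end
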